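/- arXiv:1711.10178 — 8 statements merged into one kernel-verified Lean document; each statement's English description precedes it below -/
import Mathlib

section
/- An n×k 01 matrix M is uniquely determined among all n×k 01 matrices by its row sum vector and its column sum vector (i.e., every n×k 01 matrix N whose i-th row sum equals the i-th row sum of M for every i and whose j-th column sum equals the j-th column sum of M for every j is equal to M) if and only if M contains neither the submatrix ((1,0),(0,1)) nor the submatrix ((0,1),(1,0)). -/
/-!
Flipping the four entries of a `2 × 2` permutation submatrix (Ryser's interchange) changes no
line sum, so a matrix containing one is not determined by its line sums.

Conversely, the rows of a lonesum matrix `M` are nested. Let `N ≠ M` have the same line sums and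
pick a row `i` of maximal sum in `M` among those where `M` has a `1` that `N` lacks. Equal row
sums give a column `j'` with `N i j' = 1`, `M i j' = 0`; equal column sums then give a row `i'`
with `M i' j' = 1`, `N i' j' = 0`. Nestedness makes row `i'` of `M` strictly contain row `i`,
contradicting maximality.
-/

open Finset

/-- A 01 matrix (encoded with `Bool` entries) is lonesum iff it avoids the
two 2×2 permutation submatrices. -/
def Lonesum {n k : ℕ} (M : Fin n → Fin k → Bool) : Prop :=
  ∀ i i' : Fin n, ∀ j j' : Fin k, i < i' → j < j' →
    ¬(M i j = true ∧ M i j' = false ∧ M i' j = false ∧ M i' j' = true) ∧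
    ¬(M i j = false ∧ M i j' = true ∧ M i' j = true ∧ M i' j' = false)

/-- The `i`-th row sum of a 01 matrix: the number of 1 entries in row `i`. -/
def rowSum {n k : ℕ} (M : Fin n → Fin k → Bool) (i : Fin n) : ℕ :=
  (univ.filter fun j => M i j = true).card

/-- The `j`-th column sum of a 01 matrix: the number of 1 entries in column `j`. -/
def colSum {n k : ℕ} (M : Fin n → Fin k → Bool) (j : Fin k) : ℕ :=
  (univ.filter fun i => M i j = true).card

section Counting

variable {α : Type*} [Fintype α]

lemma card_filter_comp_perm (σ : Equiv.Perm α) (p : α → Bool) :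
    #{b | p (σ b) = true} = #{b | p b = true} := by
  simp only [card_filter]
  exact Equiv.sum_comp σ fun b => if p b = true then 1 else 0

lemma card_filter_flip_pair [DecidableEq α] {p : α → Bool} {x y : α} (h : p x ≠ p y) :
    #{b | (if b = x ∨ b = y then !p b else p b) = true} = #{b | p b = true} := by
  have flip_eq_swap : ∀ b, (if b = x ∨ b = y then !p b else p b) = p (Equiv.swap x y b) := by
    intro b
    by_cases hbx : b = x
    · subst hbx
      simp [Bool.eq_not_iff, h]
    by_cases hby : b = y
    · subst hby
      simp [Bool.eq_not_iff, h.symm]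
    simp [hbx, hby, Equiv.swap_apply_of_ne_of_ne hbx hby]
  simp only [flip_eq_swap]
  exact card_filter_comp_perm (Equiv.swap x y) p

lemma exists_false_true_of_card_filter_eq {p q : α → Bool}
    (hcard : #{a | p a = true} = #{a | q a = true}) {x : α} (hp : p x = true) (hq : q x = false) :
    ∃ y, p y = false ∧ q y = true := by
  by_contra! h
  have hsub : ({a | q a = true} : Finset α) ⊆ ({a | p a = true} : Finset α) := by
    intro a ha
    simp only [mem_filter, mem_univ, true_and] at ha ⊢
    by_contra hpa
    exact h a (by simpa using hpa) ha
  have heq := eq_of_subset_of_card_le hsub hcard.le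
  have hx : x ∈ ({a | q a = true} : Finset α) := heq ▸ by simpa using hp
  simp [hq] at hx

end Counting

section Interchange

variable {n k : ℕ}

def interchange (M : Fin n → Fin k → Bool) (i i' : Fin n) (j j' : Fin k) :
    Fin n → Fin k → Bool :=
  fun a b => if (a = i ∨ a = i') ∧ (b = j ∨ b = j') then !M a b else M a b

variable {M : Fin n → Fin k → Bool} {i i' : Fin n} {j j' : Fin k}

lemma rowSum_interchange (h : M i j ≠ M i j') (hi'j : M i' j = M i j') (hi'j' : M i' j' = M i j)
    (a : Fin n) : rowSum (interchange M i i' j j') a = rowSum M a := by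
  unfold rowSum interchange
  by_cases ha : a = i ∨ a = i'
  · simp only [ha, true_and]
    apply card_filter_flip_pair
    rcases ha with rfl | rfl
    · exact h
    · rw [hi'j, hi'j']
      exact h.symm
  · simp only [ha, false_and, if_false]

lemma colSum_interchange (h : M i j ≠ M i j') (hi'j : M i' j = M i j') (hi'j' : M i' j' = M i j)
    (b : Fin k) : colSum (interchange M i i' j j') b = colSum M b := by
  unfold colSum interchange
  by_cases hb : b = j ∨ b = j'
  · simp only [hb, and_true]
    apply card_filter_flip_pair
    rcases hb with rfl | rfl
    · rw [hi'j]
      exact h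
    · rw [hi'j']
      exact h.symm
  · simp only [hb, and_false, if_false]

lemma interchange_ne : interchange M i i' j j' ≠ M := fun h => by
  simpa [interchange] using congrFun (congrFun h i) j

theorem lonesum_of_determined_by_line_sums
    (huniq : ∀ N : Fin n → Fin k → Bool,
      (∀ a, rowSum N a = rowSum M a) → (∀ b, colSum N b = colSum M b) → N = M) :
    Lonesum M := by
  have no_pattern : ∀ i i' j j', M i' j = M i j' → M i' j' = M i j → M i j = M i j' := by
    intro i i' j j' hi'j hi'j'
    by_contra h
    exact interchange_ne
      (huniq _ (rowSum_interchange h hi'j hi'j') (colSum_interchange h hi'j hi'j'))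
  intro i i' j j' _ _
  constructor <;> rintro ⟨h1, h2, h3, h4⟩ <;>
    simpa [h1, h2] using no_pattern i i' j j' (by rw [h3, h2]) (by rw [h4, h1])

end Interchange

namespace Lonesum

variable {n k : ℕ} {M N : Fin n → Fin k → Bool}

theorem row_mono (hM : Lonesum M) {i i' : Fin n} {j b : Fin k} (hij : M i j = false)
    (hi'j : M i' j = true) (hib : M i b = true) : M i' b = true := by
  by_contra hi'b
  rw [Bool.not_eq_true] at hi'b
  have hii' : i ≠ i' := by rintro rfl; simp [hij] at hi'j
  have hjb : j ≠ b := by rintro rfl; simp [hij] at hib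
  rcases lt_or_gt_of_ne hii' with hi | hi <;> rcases lt_or_gt_of_ne hjb with hj | hj
  · exact (hM i i' j b hi hj).2 ⟨hij, hib, hi'j, hi'b⟩
  · exact (hM i i' b j hi hj).1 ⟨hib, hij, hi'b, hi'j⟩
  · exact (hM i' i j b hi hj).1 ⟨hi'j, hi'b, hij, hib⟩
  · exact (hM i' i b j hi hj).2 ⟨hi'b, hi'j, hib, hij⟩

theorem rowSum_lt (hM : Lonesum M) {i i' : Fin n} {j : Fin k} (hij : M i j = false)
    (hi'j : M i' j = true) : rowSum M i < rowSum M i' := by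
  have hsub : ({b | M i b = true} : Finset (Fin k)) ⊆ ({b | M i' b = true} : Finset (Fin k)) := by
    intro b
    simpa using hM.row_mono hij hi'j
  apply card_lt_card
  rw [ssubset_iff_of_subset hsub]
  exact ⟨j, by simpa using hi'j, by simp [hij]⟩

theorem exists_larger_row (hM : Lonesum M) (hrow : ∀ a, rowSum N a = rowSum M a)
    (hcol : ∀ b, colSum N b = colSum M b) {i : Fin n} {j : Fin k} (hMij : M i j = true)
    (hNij : N i j = false) :
    ∃ i' j', M i' j' = true ∧ N i' j' = false ∧ rowSum M i < rowSum M i' := by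
  obtain ⟨j', hMij', hNij'⟩ :=
    exists_false_true_of_card_filter_eq (p := M i) (q := N i) (hrow i).symm hMij hNij
  obtain ⟨i', hNi'j', hMi'j'⟩ :=
    exists_false_true_of_card_filter_eq (p := (N · j')) (q := (M · j')) (hcol j') hNij' hMij'
  exact ⟨i', j', hMi'j', hNi'j', hM.rowSum_lt hMij' hMi'j'⟩

theorem eq_of_rowSum_eq_of_colSum_eq (hM : Lonesum M) (hrow : ∀ a, rowSum N a = rowSum M a)
    (hcol : ∀ b, colSum N b = colSum M b) : N = M := by
  by_contra hne
  have bad_entry : ∃ i j, M i j = true ∧ N i j = false := by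
    obtain ⟨i, j, hij⟩ : ∃ i j, N i j ≠ M i j := by
      by_contra! h
      exact hne (funext fun i => funext (h i))
    cases hMij : M i j
    · obtain ⟨j', hNij', hMij'⟩ :=
        exists_false_true_of_card_filter_eq (p := N i) (q := M i) (hrow i)
          (by simpa [hMij] using hij) hMij
      exact ⟨i, j', hMij', hNij'⟩
    · exact ⟨i, j, hMij, by simpa [hMij] using hij⟩
  let badRows : Finset (Fin n) := {i | ∃ j, M i j = true ∧ N i j = false}
  obtain ⟨i, hi, hmax⟩ := exists_max_image badRows (rowSum M) <| by
    obtain ⟨i, j, hij⟩ := bad_entry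
    exact ⟨i, by simpa [badRows] using ⟨j, hij⟩⟩
  obtain ⟨j, hMij, hNij⟩ := by simpa [badRows] using hi
  obtain ⟨i', j', hMi'j', hNi'j', hlt⟩ := hM.exists_larger_row hrow hcol hMij hNij
  exact (hmax i' (by simpa [badRows] using ⟨j', hMi'j', hNi'j'⟩)).not_gt hlt

end Lonesum

/-- An `n × k` 01 matrix is uniquely determined among all `n × k` 01 matrices
by its row sum vector and column sum vector iff it avoids the two 2×2
permutation submatrices, i.e. iff it is lonesum. -/
theorem ryser_lonesum_characterization {n k : ℕ} (M : Fin n → Fin k → Bool) :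
    (∀ N : Fin n → Fin k → Bool,
        (∀ i, rowSum N i = rowSum M i) → (∀ j, colSum N j = colSum M j) → N = M) ↔
      Lonesum M :=
  ⟨lonesum_of_determined_by_line_sums, fun hM _ => hM.eq_of_rowSum_eq_of_colSum_eq⟩
end

section
/- Let M be an n×k lonesum 01 matrix. Then (a) any two columns of M having the same weight are equal as vectors, and (b) for any two columns c and c' of M with w(c) < w(c'), every position at which c has entry 1 is also a position at which c' has entry 1 (the support of c is contained in the support of c'). -/
open Finset

/-- The weight of a 01 vector: the number of its entries equal to 1. -/
def weight {n : ℕ} (v : Fin n → Bool) : ℕ :=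
  (univ.filter fun i => v i = true).card

/-- The `j`-th column of a 01 matrix. -/
def colOf {n k : ℕ} (M : Fin n → Fin k → Bool) (j : Fin k) : Fin n → Bool :=
  fun i => M i j

/-!
In a lonesum matrix any two columns are comparable in the pointwise order of `Bool` vectors,
i.e. their supports are nested: rows `i`, `i'` witnessing that columns `j`, `j'` are incomparable
would carry a forbidden 2×2 permutation submatrix. Along this order the weight is monotone, and
nested vectors of equal weight are equal, so comparability gives both claims.
-/

section Weight

variable {n : ℕ}

theorem filter_eq_true_subset_of_le {v w : Fin n → Bool} (hvw : v ≤ w) :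
    (univ.filter fun i => v i = true) ⊆ univ.filter fun i => w i = true := fun i hi => by
  simp only [mem_filter, mem_univ, true_and] at hi ⊢
  exact Bool.le_iff_imp.mp (hvw i) hi

theorem weight_mono : Monotone (weight (n := n)) := fun _ _ hvw =>
  card_le_card (filter_eq_true_subset_of_le hvw)

theorem eq_of_le_of_weight_le {v w : Fin n → Bool} (hvw : v ≤ w) (hwv : weight w ≤ weight v) :
    v = w := by
  have hsupp := eq_of_subset_of_card_le (filter_eq_true_subset_of_le hvw) hwv
  funext i
  simpa using congrArg (i ∈ ·) hsupp

end Weight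

namespace Lonesum

variable {n k : ℕ} {M : Fin n → Fin k → Bool}

theorem not_crossing (hM : Lonesum M) {i i' : Fin n} {j j' : Fin k} (hi : i ≠ i') (hj : j ≠ j') :
    ¬(M i j = true ∧ M i j' = false ∧ M i' j = false ∧ M i' j' = true) := by
  rintro ⟨h₁, h₂, h₃, h₄⟩
  rcases hi.lt_or_gt with hi | hi <;> rcases hj.lt_or_gt with hj | hj
  · exact (hM i i' j j' hi hj).1 ⟨h₁, h₂, h₃, h₄⟩
  · exact (hM i i' j' j hi hj).2 ⟨h₂, h₁, h₄, h₃⟩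
  · exact (hM i' i j j' hi hj).2 ⟨h₃, h₄, h₁, h₂⟩
  · exact (hM i' i j' j hi hj).1 ⟨h₄, h₃, h₂, h₁⟩

theorem colOf_le_total (hM : Lonesum M) (j j' : Fin k) :
    colOf M j ≤ colOf M j' ∨ colOf M j' ≤ colOf M j := by
  simp only [Pi.le_def, colOf, Bool.le_iff_imp]
  by_contra! h
  simp only [Bool.not_eq_true] at h
  obtain ⟨⟨i, hij, hij'⟩, ⟨i', hi'j', hi'j⟩⟩ := h
  exact hM.not_crossing (by rintro rfl; simp_all) (by rintro rfl; simp_all) ⟨hij, hij', hi'j, hi'j'⟩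

end Lonesum

/-- In a lonesum matrix, (a) two columns of equal weight are equal, and
(b) if one column has smaller weight than another then its support is
contained in that of the other. -/
theorem lonesum_columns_chain {n k : ℕ} (M : Fin n → Fin k → Bool) (hM : Lonesum M) :
    (∀ j j' : Fin k, weight (colOf M j) = weight (colOf M j') → colOf M j = colOf M j') ∧
    (∀ j j' : Fin k, weight (colOf M j) < weight (colOf M j') →
      ∀ i : Fin n, M i j = true → M i j' = true) := by
  refine ⟨fun j j' hw => ?_, fun j j' hw i hi => ?_⟩
  · rcases hM.colOf_le_total j j' with h | h
    · exact eq_of_le_of_weight_le h hw.ge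
    · exact (eq_of_le_of_weight_le h hw.le).symm
  · rcases hM.colOf_le_total j j' with h | h
    · exact Bool.le_iff_imp.mp (h i) hi
    · exact absurd (weight_mono h) hw.not_ge
end

section
/- In an n×k lonesum 01 matrix, the number of distinct nonzero column vectors occurring among its columns equals the number of distinct nonzero row vectors occurring among its rows. -/
open Finset

/-! In a lonesum matrix any two rows are comparable entrywise, and so are any two columns.
Send a column `c` to the indicator of the set of columns dominating `c`. Two columns with the
same image dominate each other, so this map is injective; and if `c ≠ 0` the image is the
smallest of the rows `M i` with `c i = 1`. Hence there are at most
as many distinct nonzero columns as distinct nonzero rows, and transposing gives equality. -/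

section

variable {α β : Type*} [Fintype α] (M : α → β → Bool)

def upperCols (c : α → Bool) (j : β) : Bool :=
  decide (∀ i, c i ≤ M i j)

theorem upperCols_eq_of_minimal {c : α → Bool} {i₀ : α} (hi₀ : c i₀ = true)
    (hmin : ∀ i, c i = true → M i₀ ≤ M i) : upperCols M c = M i₀ := by
  funext j
  rw [Bool.eq_iff_iff]
  simp only [upperCols, decide_eq_true_eq, Bool.le_iff_imp]
  exact ⟨fun h => h i₀ hi₀, fun hj i hi => Bool.le_iff_imp.1 (hmin i hi j) hj⟩

theorem upperCols_col_self (j : β) : upperCols M (fun i => M i j) j = true := by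
  simp [upperCols]

theorem upperCols_injOn_cols : Set.InjOn (upperCols M) (Set.range fun j i => M i j) := by
  rintro _ ⟨j, rfl⟩ _ ⟨j', rfl⟩ h
  have hle : ∀ j j', upperCols M (fun i => M i j) j' = true →
      (fun i => M i j) ≤ fun i => M i j' :=
    fun _ _ h i => of_decide_eq_true h i
  exact le_antisymm (hle _ _ (h ▸ upperCols_col_self M j'))
    (hle _ _ (h ▸ upperCols_col_self M j))

theorem exists_upperCols_eq_row [Finite β] (hM : ∀ i i', M i ≤ M i' ∨ M i' ≤ M i)
    {c : α → Bool} (hc : c ≠ fun _ => false) : ∃ i, upperCols M c = M i := by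
  obtain ⟨i₀, hi₀, hmin⟩ := exists_minimalFor_of_wellFoundedLT (fun i => c i = true) M
    (by simpa [funext_iff] using hc)
  exact ⟨i₀, upperCols_eq_of_minimal M hi₀ fun i hi => (hM i₀ i).elim id (hmin hi)⟩

theorem card_nonzero_cols_le_card_nonzero_rows [Fintype β]
    (hM : ∀ i i', M i ≤ M i' ∨ M i' ≤ M i) :
    ((univ.image fun j i => M i j).filter fun c => c ≠ fun _ => false).card ≤
      ((univ.image M).filter fun r => r ≠ fun _ => false).card := by
  refine card_le_card_of_injOn (upperCols M) ?_ ((upperCols_injOn_cols M).mono ?_)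
  · intro c hc
    obtain ⟨hcol, hc⟩ := mem_filter.1 hc
    obtain ⟨j, -, rfl⟩ := mem_image.1 hcol
    obtain ⟨i, hi⟩ := exists_upperCols_eq_row M hM hc
    refine mem_filter.2 ⟨hi ▸ mem_image_of_mem M (mem_univ i), fun h => ?_⟩
    simpa [h] using upperCols_col_self M j
  · intro c hc
    obtain ⟨j, -, rfl⟩ := mem_image.1 (mem_filter.1 hc).1
    exact ⟨j, rfl⟩

end

namespace Lonesum

variable {n k : ℕ} {M : Fin n → Fin k → Bool}

theorem transpose (hM : Lonesum M) : Lonesum fun j i => M i j :=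
  fun _ _ _ _ hj hi => ⟨fun h => (hM _ _ _ _ hi hj).1 ⟨h.1, h.2.2.1, h.2.1, h.2.2.2⟩,
    fun h => (hM _ _ _ _ hi hj).2 ⟨h.1, h.2.2.1, h.2.1, h.2.2.2⟩⟩

theorem row_le_total (hM : Lonesum M) (i i' : Fin n) : M i ≤ M i' ∨ M i' ≤ M i := by
  by_contra! h
  obtain ⟨⟨j, hij, hi'j⟩, ⟨j', hi'j', hij'⟩⟩ :
      (∃ j, M i j = true ∧ M i' j = false) ∧ ∃ j', M i' j' = true ∧ M i j' = false := by
    simpa [Pi.le_def, Bool.le_iff_imp] using h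
  rcases lt_trichotomy i i' with hi | rfl | hi <;> rcases lt_trichotomy j j' with hj | rfl | hj
  all_goals first
    | simp_all
    | exact (hM _ _ _ _ hi hj).1 ⟨‹_›, ‹_›, ‹_›, ‹_›⟩
    | exact (hM _ _ _ _ hi hj).2 ⟨‹_›, ‹_›, ‹_›, ‹_›⟩

end Lonesum

/-- In a lonesum matrix, the number of distinct nonzero column vectors equals
the number of distinct nonzero row vectors. -/
theorem lonesum_card_distinct_cols_eq_rows {n k : ℕ} (M : Fin n → Fin k → Bool)
    (hM : Lonesum M) :
    ((univ.image fun j : Fin k => fun i : Fin n => M i j).filter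
        fun c => c ≠ fun _ => false).card =
      ((univ.image fun i : Fin n => fun j : Fin k => M i j).filter
        fun r => r ≠ fun _ => false).card :=
  le_antisymm (card_nonzero_cols_le_card_nonzero_rows M hM.row_le_total)
    (card_nonzero_cols_le_card_nonzero_rows _ hM.transpose.row_le_total)
end

section
/- For all n ≥ 1, m ≥ 1 and d ≥ 1, the restricted Stirling numbers satisfy S(n,m)_{≤d} + C(n−1, d)·S(n−d−1, m−1)_{≤d} = S(n−1, m−1)_{≤d} + m·S(n−1, m)_{≤d}, where C(n−1,d) is the binomial coefficient and the term S(n−d−1, m−1)_{≤d} is taken to be 0 when n < d+1 (note C(n−1,d) = 0 in that case). -/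
open Finset

/-- The restricted Stirling number of the second kind `S(n,m)_{≤ d}`:
the number of partitions of an `n`-element set into exactly `m` nonempty
blocks, each of cardinality at most `d`. -/
noncomputable def restrictedStirling (n m d : ℕ) : ℕ :=
  Nat.card {P : Finpartition (univ : Finset (Fin n)) //
    P.parts.card = m ∧ ∀ b ∈ P.parts, b.card ≤ d}

/-!
Sorting the partitions counted by `S(n+1, m+1)` according to the block containing a fixed
point gives `S(n+1, m+1) = ∑_{j<d} C(n, j) S(n-j, m)`, and double counting pairs
(partition, block) gives `(m+1) S(n, m+1) = ∑_{j<d} C(n, j+1) S(n-j-1, m)`. After an index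
shift the two sums differ exactly by the terms `j = 0` and `j = d`, which is the recurrence.
Both counts rest on the bijection between partitions of `s` having `B` as a block and
partitions of `s \ B`, together with the fact that the number of restricted partitions of a
finset only depends on its cardinality.
-/

variable {α β : Type*} [DecidableEq α] [DecidableEq β]

namespace Finpartition

def mapEmb (f : α ↪ β) {s : Finset α} (P : Finpartition s) : Finpartition (s.map f) :=
  ofExistsUnique (P.parts.map (mapEmbedding f).toEmbedding)
    (by
      simp only [mem_map, RelEmbedding.coe_toEmbedding, mapEmbedding_apply]
      rintro _ ⟨b, hb, rfl⟩
      exact map_subset_map.2 (P.le hb))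
    (by
      simp only [mem_map, RelEmbedding.coe_toEmbedding, mapEmbedding_apply]
      rintro _ ⟨x, hx, rfl⟩
      refine ⟨(P.part x).map f,
        ⟨⟨_, P.part_mem.2 hx, rfl⟩, mem_map_of_mem _ (P.mem_part_self.2 hx)⟩, ?_⟩
      rintro _ ⟨⟨b, hb, rfl⟩, hxb⟩
      rw [P.part_eq_of_mem hb ((mem_map' f).1 hxb)])
    (by simp [P.empty_notMem_parts])

noncomputable def comapEmb (f : α ↪ β) {s : Finset α} (Q : Finpartition (s.map f)) :
    Finpartition s :=
  ofExistsUnique (Q.parts.image (·.preimage f f.injective.injOn))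
    (by
      simp only [mem_image]
      rintro _ ⟨t, ht, rfl⟩
      exact preimage_subset (Q.le ht))
    (by
      intro x hx
      obtain ⟨t, ⟨ht, hxt⟩, hunique⟩ := Q.existsUnique_mem (mem_map_of_mem f hx)
      refine ⟨t.preimage f f.injective.injOn,
        ⟨mem_image_of_mem _ ht, by simpa using hxt⟩, ?_⟩
      simp only [mem_image]
      rintro _ ⟨⟨u, hu, rfl⟩, hxu⟩
      rw [hunique u ⟨hu, by simpa using hxu⟩])
    (by
      simp only [mem_image, not_exists, not_and]
      intro t ht h
      obtain ⟨u, -, rfl⟩ := subset_map_iff.1 (Q.le ht)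
      rw [preimage_map] at h
      subst h
      exact Q.empty_notMem_parts ht)

@[simp]
lemma mapEmb_parts (f : α ↪ β) {s : Finset α} (P : Finpartition s) :
    (P.mapEmb f).parts = P.parts.map (mapEmbedding f).toEmbedding :=
  rfl

noncomputable def mapEquiv (f : α ↪ β) (s : Finset α) :
    Finpartition s ≃ Finpartition (s.map f) where
  toFun := mapEmb f
  invFun := comapEmb f
  left_inv P := by
    ext1
    rw [comapEmb, ofExistsUnique_parts, mapEmb_parts, map_eq_image, image_image]
    exact (image_congr fun b _ ↦ preimage_map f b).trans image_id
  right_inv Q := by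
    ext1
    rw [mapEmb_parts, comapEmb, ofExistsUnique_parts, map_eq_image, image_image]
    refine (image_congr fun t ht ↦ ?_).trans image_id
    obtain ⟨u, -, rfl⟩ := subset_map_iff.1 (Q.le ht)
    simp

lemma avoid_parts_of_mem {s B : Finset α} {P : Finpartition s} (hB : B ∈ P.parts) :
    (P.avoid B).parts = P.parts.erase B := by
  ext c
  rw [mem_avoid, mem_erase]
  constructor
  · rintro ⟨u, hu, hub, rfl⟩
    have hne : u ≠ B := by rintro rfl; exact hub le_rfl
    have hdisj : Disjoint u B := P.disjoint hu hB hne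
    rw [sdiff_eq_self_of_disjoint hdisj]
    exact ⟨hne, hu⟩
  · rintro ⟨hne, hc⟩
    have hdisj : Disjoint c B := P.disjoint hc hB hne
    refine ⟨c, hc, fun h ↦ ?_, sdiff_eq_self_of_disjoint hdisj⟩
    obtain ⟨x, hx⟩ := P.nonempty_of_mem_parts hc
    exact disjoint_left.1 hdisj hx (h hx)

lemma insert_mem_parts_iff {s C : Finset α} {a : α} (P : Finpartition s) (ha : a ∈ s)
    (haC : a ∉ C) : insert a C ∈ P.parts ↔ (P.part a).erase a = C := by
  constructor
  · intro h
    rw [P.part_eq_of_mem h (mem_insert_self a C), erase_insert haC]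
  · rintro rfl
    rw [insert_erase (P.mem_part_self.2 ha)]
    exact P.part_mem.2 ha

end Finpartition

def restrictedPartitions (s : Finset α) (m d : ℕ) : Finset (Finpartition s) :=
  {P | #P.parts = m ∧ ∀ b ∈ P.parts, #b ≤ d}

@[simp]
lemma mem_restrictedPartitions {s : Finset α} {m d : ℕ} {P : Finpartition s} :
    P ∈ restrictedPartitions s m d ↔ #P.parts = m ∧ ∀ b ∈ P.parts, #b ≤ d := by
  simp [restrictedPartitions]

lemma restrictedStirling_eq_card (n m d : ℕ) :
    restrictedStirling n m d = #(restrictedPartitions (univ : Finset (Fin n)) m d) := by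
  rw [restrictedStirling, Nat.card_eq_fintype_card, Fintype.card_subtype, restrictedPartitions]
  congr

lemma card_restrictedPartitions_map (f : α ↪ β) (s : Finset α) (m d : ℕ) :
    #(restrictedPartitions (s.map f) m d) = #(restrictedPartitions s m d) :=
  (card_equiv (Finpartition.mapEquiv f s) fun P ↦ by simp [Finpartition.mapEquiv]).symm

lemma card_restrictedPartitions (s : Finset α) (m d : ℕ) :
    #(restrictedPartitions s m d) = restrictedStirling #s m d := by
  let f : Fin #s ↪ α := s.equivFin.symm.toEmbedding.trans (.subtype (· ∈ s))
  have hf : univ.map f = s := by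
    rw [← map_map, map_univ_equiv, univ_eq_attach, attach_map_val]
  rw [restrictedStirling_eq_card, ← card_restrictedPartitions_map f, hf]

lemma card_restrictedPartitions_filter_mem_parts_eq_sdiff {s B : Finset α} (hBs : B ⊆ s)
    (hB : B.Nonempty) {d : ℕ} (hBd : #B ≤ d) (m : ℕ) :
    #{P ∈ restrictedPartitions s (m + 1) d | B ∈ P.parts} =
      #(restrictedPartitions (s \ B) m d) := by
  have hBQ (Q : Finpartition (s \ B)) : B ∉ Q.parts := fun hQ ↦ by
    obtain ⟨x, hx⟩ := hB
    exact (mem_sdiff.1 (Q.le hQ hx)).2 hx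
  refine card_nbij' (fun P ↦ P.avoid B)
    (fun Q ↦ Q.extend hB.ne_empty sdiff_disjoint (sdiff_union_of_subset hBs)) ?_ ?_ ?_ ?_
  · intro P hP
    simp only [coe_filter, mem_restrictedPartitions, Set.mem_ofPred_eq, mem_coe] at hP ⊢
    obtain ⟨⟨hcard, hsize⟩, hBP⟩ := hP
    rw [Finpartition.avoid_parts_of_mem hBP, card_erase_of_mem hBP, hcard]
    exact ⟨rfl, fun b hb ↦ hsize b (mem_of_mem_erase hb)⟩
  · intro Q hQ
    simp only [coe_filter, mem_restrictedPartitions, Set.mem_ofPred_eq, mem_coe,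
      Finpartition.extend_parts, card_insert_of_notMem (hBQ Q), forall_mem_insert] at hQ ⊢
    exact ⟨⟨by rw [hQ.1], hBd, hQ.2⟩, mem_insert_self _ _⟩
  · intro P hP
    simp only [coe_filter, Set.mem_ofPred_eq] at hP
    ext1
    rw [Finpartition.extend_parts, Finpartition.avoid_parts_of_mem hP.2, insert_erase hP.2]
  · intro Q _
    ext1
    rw [Finpartition.avoid_parts_of_mem (mem_insert_self _ _), Finpartition.extend_parts,
      erase_insert (hBQ Q)]

lemma card_restrictedPartitions_filter_mem_parts {s B : Finset α} (hBs : B ⊆ s) (m d : ℕ) :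
    #{P ∈ restrictedPartitions s (m + 1) d | B ∈ P.parts} =
      if 0 < #B ∧ #B ≤ d then restrictedStirling (#s - #B) m d else 0 := by
  split_ifs with hB
  · rw [card_restrictedPartitions_filter_mem_parts_eq_sdiff hBs (card_pos.1 hB.1) hB.2,
      card_restrictedPartitions, card_sdiff_of_subset hBs]
  · rw [card_eq_zero, filter_eq_empty_iff]
    intro P hP hBP
    exact hB ⟨card_pos.2 (P.nonempty_of_mem_parts hBP), (mem_restrictedPartitions.1 hP).2 B hBP⟩

lemma sum_range_mul_ite_lt {L d : ℕ} {c F : ℕ → ℕ} (hc : ∀ k, L ≤ k → c k = 0) :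
    ∑ k ∈ range L, c k * (if k < d then F k else 0) = ∑ k ∈ range d, c k * F k := by
  simp_rw [mul_ite, mul_zero]
  rw [← sum_filter]
  apply sum_subset
  · intro k
    simp only [mem_filter, mem_range]
    omega
  · intro k hk hk'
    simp only [mem_filter, mem_range, not_and] at hk hk'
    rw [hc k (by omega), zero_mul]

theorem restrictedStirling_succ_succ (n m d : ℕ) :
    restrictedStirling (n + 1) (m + 1) d =
      ∑ j ∈ range d, n.choose j * restrictedStirling (n - j) m d := by
  set R := restrictedPartitions (univ : Finset (Fin (n + 1))) (m + 1) d
  have hmaps : Set.MapsTo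
      (fun P : Finpartition (univ : Finset (Fin (n + 1))) ↦ (P.part 0).erase 0) (R : Set _)
      (univ.erase (0 : Fin (n + 1))).powerset := by
    intro P _
    simp
  have hfiber : ∀ C ∈ (univ.erase (0 : Fin (n + 1))).powerset,
      #{P ∈ R | (P.part 0).erase 0 = C} =
        if #C < d then restrictedStirling (n - #C) m d else 0 := by
    intro C hC
    have h0C : 0 ∉ C := fun h ↦ by simpa using mem_powerset.1 hC h
    rw [← filter_congr fun P _ ↦ P.insert_mem_parts_iff (mem_univ 0) h0C,
      card_restrictedPartitions_filter_mem_parts (subset_univ _)]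
    simp only [card_insert_of_notMem h0C, card_univ, Fintype.card_fin, Nat.add_sub_add_right,
      Nat.add_one_pos, true_and, Nat.add_one_le_iff]
  rw [restrictedStirling_eq_card, card_eq_sum_card_fiberwise hmaps, sum_congr rfl hfiber,
    sum_powerset_apply_card fun k ↦ if k < d then restrictedStirling (n - k) m d else 0]
  simp only [card_erase_of_mem (mem_univ _), card_univ, Fintype.card_fin, Nat.add_sub_cancel,
    smul_eq_mul]
  exact sum_range_mul_ite_lt fun k hk ↦ Nat.choose_eq_zero_of_lt (by omega)

theorem succ_mul_restrictedStirling (n m d : ℕ) :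
    (m + 1) * restrictedStirling n (m + 1) d =
      ∑ j ∈ range d, n.choose (j + 1) * restrictedStirling (n - (j + 1)) m d := by
  set R := restrictedPartitions (univ : Finset (Fin n)) (m + 1) d
  let r (P : Finpartition (univ : Finset (Fin n))) (B : Finset (Fin n)) : Prop := B ∈ P.parts
  have habove : ∀ P ∈ R, #(univ.powerset.bipartiteAbove r P) = m + 1 := by
    intro P hP
    rw [bipartiteAbove, filter_mem_eq_inter,
      inter_eq_right.2 fun b _ ↦ mem_powerset.2 (subset_univ b)]
    exact (mem_restrictedPartitions.1 hP).1
  have hbelow : ∀ B ∈ (univ : Finset (Fin n)).powerset,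
      #(R.bipartiteBelow r B) =
      if 0 < #B ∧ #B ≤ d then restrictedStirling (n - #B) m d else 0 := by
    intro B _
    rw [bipartiteBelow, card_restrictedPartitions_filter_mem_parts (subset_univ B), card_univ,
      Fintype.card_fin]
  have hdouble :=
    sum_card_bipartiteAbove_eq_sum_card_bipartiteBelow (s := R) (t := univ.powerset) (r := r)
  rw [sum_congr rfl habove, sum_const, smul_eq_mul, sum_congr rfl hbelow,
    sum_powerset_apply_card fun k ↦
      if 0 < k ∧ k ≤ d then restrictedStirling (n - k) m d else 0] at hdouble
  rw [restrictedStirling_eq_card, mul_comm, hdouble, card_univ, Fintype.card_fin,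
    sum_range_succ']
  simp only [smul_eq_mul, Nat.add_one_pos, true_and, Nat.add_one_le_iff, lt_irrefl, false_and,
    if_false, mul_zero, add_zero]
  exact sum_range_mul_ite_lt fun k hk ↦ Nat.choose_eq_zero_of_lt (by omega)

theorem restrictedStirling_recurrence_general (n m d : ℕ) (hn : 1 ≤ n) (hm : 1 ≤ m) :
    restrictedStirling n m d +
        Nat.choose (n - 1) d * restrictedStirling (n - d - 1) (m - 1) d =
      restrictedStirling (n - 1) (m - 1) d + m * restrictedStirling (n - 1) m d := by
  obtain ⟨n, rfl⟩ := Nat.exists_eq_add_of_le' hn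
  obtain ⟨m, rfl⟩ := Nat.exists_eq_add_of_le' hm
  rw [Nat.add_sub_cancel, Nat.add_sub_cancel, Nat.sub_right_comm, Nat.add_sub_cancel,
    restrictedStirling_succ_succ, succ_mul_restrictedStirling, ← sum_range_succ, sum_range_succ',
    Nat.choose_zero_right, Nat.sub_zero, one_mul, add_comm]

/-- The recurrence
`S(n,m)_{≤d} + C(n−1,d)·S(n−d−1,m−1)_{≤d} = S(n−1,m−1)_{≤d} + m·S(n−1,m)_{≤d}`. -/
theorem restrictedStirling_recurrence (n m d : ℕ) (hn : 1 ≤ n) (hm : 1 ≤ m) (hd : 1 ≤ d) :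
    restrictedStirling n m d +
        Nat.choose (n - 1) d * restrictedStirling (n - d - 1) (m - 1) d =
      restrictedStirling (n - 1) (m - 1) d + m * restrictedStirling (n - 1) m d :=
  restrictedStirling_recurrence_general n m d hn hm
end

section
/- For all natural numbers n, k and d ≥ 1, the number of n×k lonesum 01 matrices having no all-zero column and no all-zero row, in which every column vector occurs at most d times among the columns and every row vector occurs at most d times among the rows, is pB(n,k)_{≤d} = ∑_{m=0}^{min(n,k)} m! · S(n,m)_{≤d} · m! · S(k,m)_{≤d}. -/
open Finset

/-- The `i`-th row of a 01 matrix. -/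
def rowOf {n k : ℕ} (M : Fin n → Fin k → Bool) (i : Fin n) : Fin k → Bool :=
  fun j => M i j

/-- `pB(n,k)_{≤d}`: the number of `n × k` lonesum 01 matrices with no all-zero
column and no all-zero row, in which every column vector occurs at most `d`
times among the columns and every row vector occurs at most `d` times among
the rows. -/
noncomputable def pB (n k d : ℕ) : ℕ :=
  Nat.card {M : Fin n → Fin k → Bool // Lonesum M ∧
    (∀ j, ∃ i, M i j = true) ∧ (∀ i, ∃ j, M i j = true) ∧
    (∀ j, (univ.filter fun j' => colOf M j' = colOf M j).card ≤ d) ∧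
    (∀ i, (univ.filter fun i' => rowOf M i' = rowOf M i).card ≤ d)}

/-!
The distinct columns of a lonesum matrix form a chain under inclusion. If there are `m` of them,
sending column `j` to the number of distinct columns strictly below it and row `i` to the number
of distinct columns vanishing at `i` gives surjections `g`, `f` onto `Fin m` (surjectivity of `f`
uses the absence of zero columns) with `M i j = 1 ↔ f i ≤ g j`. Conversely such a threshold matrix
of two surjections is lonesum without zero rows or columns, and it determines `m`, `f` and `g`,
because `f` and `g` are recovered up to an order isomorphism of `Fin m` from the inclusions between
rows and between columns. Two rows (columns) coincide iff their values under `f` (`g`) do, so the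
repetition bound `d` becomes a bound on the fibres, and every partition into `m` blocks is the
fibre partition of exactly `m!` surjections onto `Fin m`.
-/

open Function

lemma exists_orderIso_comp_eq_of_le_iff {α β γ : Type*} [LinearOrder β] [PartialOrder γ]
    {f : α → β} {g : α → γ} (hf : Surjective f) (hg : Surjective g)
    (h : ∀ a b, f a ≤ f b ↔ g a ≤ g b) : ∃ e : β ≃o γ, ∀ a, e (f a) = g a := by
  have hcomp (a : α) : g (surjInv hf (f a)) = g a := by
    have := surjInv_eq hf (f a)
    exact le_antisymm ((h _ _).1 this.le) ((h _ _).1 this.ge)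
  have hmono : StrictMono (g ∘ surjInv hf) := fun x y hxy => by
    rw [← surjInv_eq hf x, ← surjInv_eq hf y] at hxy
    exact lt_of_le_not_ge ((h _ _).1 hxy.le) (mt (h _ _).2 hxy.not_ge)
  have hsurj : Surjective (g ∘ surjInv hf) := fun y => by
    obtain ⟨a, rfl⟩ := hg y
    exact ⟨f a, hcomp a⟩
  exact ⟨hmono.orderIsoOfSurjective _ hsurj, hcomp⟩

section ChainRank

variable {β : Type*} [PartialOrder β] [DecidableLT β] {C : Finset β} {c c' : β}

lemma card_filter_lt_lt_card (hc : c ∈ C) : #{x ∈ C | x < c} < #C :=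
  card_lt_card (filter_ssubset.2 ⟨c, hc, lt_irrefl c⟩)

lemma card_filter_lt_mono (h : c ≤ c') : #{x ∈ C | x < c} ≤ #{x ∈ C | x < c'} :=
  card_le_card (monotone_filter_right C fun _ _ hx => hx.trans_le h)

lemma card_filter_lt_strictMono (hc : c ∈ C) (h : c < c') :
    #{x ∈ C | x < c} < #{x ∈ C | x < c'} :=
  card_lt_card <| (ssubset_iff_of_subset (monotone_filter_right C fun _ _ hx => hx.trans h)).2
    ⟨c, mem_filter.2 ⟨hc, h⟩, fun hc' => lt_irrefl c (mem_filter.1 hc').2⟩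

lemma IsChain.image_card_filter_lt (hC : IsChain (· ≤ ·) (C : Set β)) :
    C.image (fun c => #{x ∈ C | x < c}) = range #C := by
  refine eq_of_subset_of_card_le (fun t ht => ?_) ?_
  · obtain ⟨c, hc, rfl⟩ := mem_image.1 ht
    exact mem_range.2 (card_filter_lt_lt_card hc)
  · rw [card_range, card_image_of_injOn]
    intro a ha b hb hab
    by_contra hne
    rcases hC.total ha hb with h | h
    · exact (card_filter_lt_strictMono ha (h.lt_of_ne hne)).ne hab
    · exact (card_filter_lt_strictMono hb (h.lt_of_ne (Ne.symm hne))).ne hab.symm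

lemma IsChain.exists_card_filter_lt_eq (hC : IsChain (· ≤ ·) (C : Set β)) {t : ℕ}
    (ht : t < #C) : ∃ c ∈ C, #{x ∈ C | x < c} = t :=
  mem_image.1 (hC.image_card_filter_lt ▸ mem_range.2 ht)

end ChainRank

section BoolChain

variable {ι : Type*} [DecidableLT (ι → Bool)] {C : Finset (ι → Bool)} {c : ι → Bool}

lemma IsChain.apply_eq_true_iff (hC : IsChain (· ≤ ·) (C : Set (ι → Bool))) (hc : c ∈ C)
    (i : ι) : c i = true ↔ #{x ∈ C | x i = false} ≤ #{x ∈ C | x < c} := by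
  constructor
  · intro hci
    refine card_le_card (fun x hx => ?_)
    obtain ⟨hxC, hxi⟩ := mem_filter.1 hx
    refine mem_filter.2 ⟨hxC, ((hC.total hxC hc).resolve_right fun hcx => ?_).lt_of_ne ?_⟩
    · simpa [Bool.le_iff_imp, hci, hxi] using hcx i
    · rintro rfl
      simp [hci] at hxi
  · intro hle
    by_contra hci
    refine hle.not_gt (card_lt_card ((ssubset_iff_of_subset fun x hx => ?_).2
      ⟨c, mem_filter.2 ⟨hc, by simpa using hci⟩, fun h => lt_irrefl c (mem_filter.1 h).2⟩))
    obtain ⟨hxC, hxc⟩ := mem_filter.1 hx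
    exact mem_filter.2 ⟨hxC, by simpa [Bool.le_iff_imp, hci] using hxc.le i⟩

lemma IsChain.exists_card_filter_apply_eq_false_eq (hC : IsChain (· ≤ ·) (C : Set (ι → Bool)))
    (hpos : ∀ c ∈ C, ∃ i, c i = true) {t : ℕ} (ht : t < #C) :
    ∃ i, #{x ∈ C | x i = false} = t := by
  obtain ⟨c, hc, hct⟩ := hC.exists_card_filter_lt_eq ht
  cases t with
  | zero =>
    obtain ⟨i, hi⟩ := hpos c hc
    exact ⟨i, Nat.le_zero.1 (hct ▸ (hC.apply_eq_true_iff hc i).1 hi)⟩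
  | succ s =>
    -- a coordinate where `c` (rank `s + 1`) is `1` and `c'` (rank `s`) is `0` has level `s + 1`
    obtain ⟨c', hc', hc's⟩ := hC.exists_card_filter_lt_eq (Nat.lt_of_succ_lt ht)
    have hcc' : ¬ c ≤ c' := fun h => by have := card_filter_lt_mono (C := C) h; omega
    obtain ⟨i, hi⟩ := not_forall.1 (mt Pi.le_def.2 hcc')
    rw [Bool.le_iff_imp, Classical.not_imp, Bool.not_eq_true] at hi
    have h₁ := (hC.apply_eq_true_iff hc i).1 hi.1
    have h₂ := mt (hC.apply_eq_true_iff hc' i).2 (by simp [hi.2])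
    exact ⟨i, by omega⟩

end BoolChain

namespace Lonesum

variable {n k : ℕ} {M : Fin n → Fin k → Bool}

lemma not_cross (hM : Lonesum M) {i i' : Fin n} {j j' : Fin k} (h₁ : M i j = true)
    (h₂ : M i j' = false) (h₃ : M i' j = false) (h₄ : M i' j' = true) : False := by
  rcases lt_trichotomy i i' with hi | rfl | hi <;>
    rcases lt_trichotomy j j' with hj | rfl | hj <;> try simp_all
  · exact (hM i i' j j' hi hj).1 ⟨h₁, h₂, h₃, h₄⟩
  · exact (hM i i' j' j hi hj).2 ⟨h₂, h₁, h₄, h₃⟩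
  · exact (hM i' i j j' hi hj).2 ⟨h₃, h₄, h₁, h₂⟩
  · exact (hM i' i j' j hi hj).1 ⟨h₄, h₃, h₂, h₁⟩

lemma isChain_image_colOf (hM : Lonesum M) :
    IsChain (· ≤ ·) ((univ.image (colOf M) : Finset (Fin n → Bool)) : Set (Fin n → Bool)) := by
  intro _ hx _ hy _
  obtain ⟨j, -, rfl⟩ := mem_image.1 hx
  obtain ⟨j', -, rfl⟩ := mem_image.1 hy
  by_contra! h
  simp only [Pi.le_def, colOf, Bool.le_iff_imp, not_forall, Bool.not_eq_true] at h
  obtain ⟨⟨i, hij, hij'⟩, ⟨i', hi'j', hi'j⟩⟩ := h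
  exact hM.not_cross hij hij' hi'j hi'j'

end Lonesum

section Threshold

variable {n k m : ℕ}

def thresholdMatrix (f : Fin n → Fin m) (g : Fin k → Fin m) : Fin n → Fin k → Bool :=
  fun i j => decide (f i ≤ g j)

lemma lonesum_thresholdMatrix (f : Fin n → Fin m) (g : Fin k → Fin m) :
    Lonesum (thresholdMatrix f g) := by
  intro i i' j j' _ _
  simp only [thresholdMatrix, decide_eq_true_eq, decide_eq_false_iff_not, not_le]
  constructor <;> rintro ⟨h₁, h₂, h₃, h₄⟩ <;> omega

lemma thresholdMatrix_rows_nonzero (f : Fin n → Fin m) {g : Fin k → Fin m} (hg : Surjective g)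
    (i : Fin n) : ∃ j, thresholdMatrix f g i j = true := by
  obtain ⟨j, hj⟩ := hg (f i)
  exact ⟨j, decide_eq_true hj.ge⟩

lemma thresholdMatrix_cols_nonzero {f : Fin n → Fin m} (hf : Surjective f) (g : Fin k → Fin m)
    (j : Fin k) : ∃ i, thresholdMatrix f g i j = true := by
  obtain ⟨i, hi⟩ := hf ⟨0, (g j).pos⟩
  exact ⟨i, decide_eq_true (by simp [Fin.le_def, hi])⟩

lemma rowOf_thresholdMatrix_le_iff (f : Fin n → Fin m) {g : Fin k → Fin m} (hg : Surjective g)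
    (i i' : Fin n) :
    rowOf (thresholdMatrix f g) i ≤ rowOf (thresholdMatrix f g) i' ↔ f i' ≤ f i := by
  simp only [Pi.le_def, rowOf, thresholdMatrix, Bool.le_iff_imp, decide_eq_true_eq]
  refine ⟨fun h => ?_, fun h j hj => h.trans hj⟩
  obtain ⟨j, hj⟩ := hg (f i)
  exact hj ▸ h j hj.ge

lemma colOf_thresholdMatrix_le_iff {f : Fin n → Fin m} (hf : Surjective f) (g : Fin k → Fin m)
    (j j' : Fin k) :
    colOf (thresholdMatrix f g) j ≤ colOf (thresholdMatrix f g) j' ↔ g j ≤ g j' := by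
  simp only [Pi.le_def, colOf, thresholdMatrix, Bool.le_iff_imp, decide_eq_true_eq]
  refine ⟨fun h => ?_, fun h i hi => hi.trans h⟩
  obtain ⟨i, hi⟩ := hf (g j)
  exact hi ▸ h i hi.le

lemma rowOf_thresholdMatrix_eq_iff (f : Fin n → Fin m) {g : Fin k → Fin m} (hg : Surjective g)
    (i i' : Fin n) :
    rowOf (thresholdMatrix f g) i = rowOf (thresholdMatrix f g) i' ↔ f i = f i' := by
  rw [le_antisymm_iff, le_antisymm_iff, rowOf_thresholdMatrix_le_iff f hg,
    rowOf_thresholdMatrix_le_iff f hg, and_comm]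

lemma colOf_thresholdMatrix_eq_iff {f : Fin n → Fin m} (hf : Surjective f) (g : Fin k → Fin m)
    (j j' : Fin k) :
    colOf (thresholdMatrix f g) j = colOf (thresholdMatrix f g) j' ↔ g j = g j' := by
  rw [le_antisymm_iff, le_antisymm_iff, colOf_thresholdMatrix_le_iff hf,
    colOf_thresholdMatrix_le_iff hf]

lemma thresholdMatrix_injective {m' : ℕ} {f : Fin n → Fin m} {g : Fin k → Fin m}
    {f' : Fin n → Fin m'} {g' : Fin k → Fin m'} (hf : Surjective f) (hg : Surjective g)
    (hf' : Surjective f') (hg' : Surjective g')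
    (h : thresholdMatrix f g = thresholdMatrix f' g') :
    m = m' ∧ (∀ i, (f i : ℕ) = f' i) ∧ ∀ j, (g j : ℕ) = g' j := by
  obtain ⟨e, he⟩ := exists_orderIso_comp_eq_of_le_iff hf hf' fun a b => by
    rw [← rowOf_thresholdMatrix_le_iff f hg b a, h, rowOf_thresholdMatrix_le_iff f' hg' b a]
  obtain ⟨e', he'⟩ := exists_orderIso_comp_eq_of_le_iff hg hg' fun a b => by
    rw [← colOf_thresholdMatrix_le_iff hf g a b, h, colOf_thresholdMatrix_le_iff hf' g' a b]
  refine ⟨Fin.equiv_iff_eq.1 ⟨e.toEquiv⟩, fun i => ?_, fun j => ?_⟩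
  · rw [← he, Fin.coe_orderIso_apply]
  · rw [← he', Fin.coe_orderIso_apply]

lemma Lonesum.exists_eq_thresholdMatrix {M : Fin n → Fin k → Bool} (hM : Lonesum M)
    (hcol : ∀ j, ∃ i, M i j = true) (hrow : ∀ i, ∃ j, M i j = true) :
    ∃ (m : ℕ) (f : Fin n → Fin m) (g : Fin k → Fin m),
      Surjective f ∧ Surjective g ∧ M = thresholdMatrix f g := by
  classical
  set C := univ.image (colOf M)
  have hC := hM.isChain_image_colOf
  have hcolC (j : Fin k) : colOf M j ∈ C := mem_image_of_mem _ (mem_univ j)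
  have hrowlt (i : Fin n) : #{x ∈ C | x i = false} < #C := by
    obtain ⟨j, hj⟩ := hrow i
    exact card_lt_card (filter_ssubset.2 ⟨colOf M j, hcolC j, by simp [colOf, hj]⟩)
  refine ⟨#C, fun i => ⟨_, hrowlt i⟩, fun j => ⟨_, card_filter_lt_lt_card (hcolC j)⟩,
    fun t => ?_, fun t => ?_, ?_⟩
  · have hpos : ∀ c ∈ C, ∃ i, c i = true := by
      intro c hc
      obtain ⟨j, -, rfl⟩ := mem_image.1 hc
      exact hcol j
    obtain ⟨i, hi⟩ := hC.exists_card_filter_apply_eq_false_eq hpos t.2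
    exact ⟨i, Fin.ext hi⟩
  · obtain ⟨c, hc, hct⟩ := hC.exists_card_filter_lt_eq t.2
    obtain ⟨j, -, rfl⟩ := mem_image.1 hc
    exact ⟨j, Fin.ext hct⟩
  · funext i j
    rw [thresholdMatrix, Bool.eq_iff_iff, decide_eq_true_iff, Fin.mk_le_mk]
    exact hC.apply_eq_true_iff (hcolC j) i

end Threshold

section FiberPartition

abbrev SurjWithFibers (α : Type*) [Fintype α] [DecidableEq α] (m : ℕ) (p : Finset α → Prop) :
    Type _ :=
  {f : α → Fin m // Surjective f ∧ ∀ a, p (univ.filter fun a' => f a' = f a)}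

variable {α : Type*} [Fintype α] [DecidableEq α]

def fiberPartition {β : Type*} [DecidableEq β] (f : α → β) : Finpartition (univ : Finset α) :=
  Finpartition.ofSetoid (Setoid.ker f)

lemma part_fiberPartition {β : Type*} [DecidableEq β] (f : α → β) (a : α) :
    (fiberPartition f).part a = univ.filter fun a' => f a' = f a := by
  ext b
  rw [fiberPartition, Finpartition.mem_part_ofSetoid_iff_rel, mem_filter]
  simp [eq_comm]

namespace Finpartition

lemma ext_part {P Q : Finpartition (univ : Finset α)} (h : ∀ a, P.part a = Q.part a) :
    P = Q := by
  suffices ∀ P Q : Finpartition (univ : Finset α), (∀ a, P.part a = Q.part a) →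
      P.parts ⊆ Q.parts from
    Finpartition.ext (subset_antisymm (this P Q h) (this Q P (h · |>.symm)))
  intro P Q h b hb
  obtain ⟨a, ha⟩ := P.nonempty_of_mem_parts hb
  rw [← P.part_eq_of_mem hb ha, h]
  exact Q.part_mem.2 (mem_univ a)

def toParts (P : Finpartition (univ : Finset α)) (a : α) : P.parts :=
  ⟨P.part a, P.part_mem.2 (mem_univ a)⟩

lemma toParts_surjective (P : Finpartition (univ : Finset α)) : Surjective P.toParts :=
  fun b => by
    obtain ⟨a, -, ha⟩ := P.part_surjOn b.2
    exact ⟨a, Subtype.ext ha⟩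

lemma toParts_eq_toParts_iff (P : Finpartition (univ : Finset α)) (a b : α) :
    P.toParts a = P.toParts b ↔ a ∈ P.part b := by
  rw [toParts, toParts, Subtype.mk.injEq, P.mem_part_iff_part_eq_part (mem_univ a) (mem_univ b)]

end Finpartition

lemma fiberPartition_eq_iff {β : Type*} [DecidableEq β] {f : α → β}
    {P : Finpartition (univ : Finset α)} :
    fiberPartition f = P ↔ ∀ a b, f a = f b ↔ P.toParts a = P.toParts b := by
  constructor
  · rintro rfl a b
    rw [Finpartition.toParts_eq_toParts_iff, part_fiberPartition, mem_filter]
    exact (and_iff_right (mem_univ a)).symm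
  · intro h
    refine Finpartition.ext_part fun a => Finset.ext fun b => ?_
    rw [part_fiberPartition, mem_filter, ← Finpartition.toParts_eq_toParts_iff, ← h]
    exact and_iff_right (mem_univ b)

noncomputable def Finpartition.equivSurjective (P : Finpartition (univ : Finset α)) (m : ℕ) :
    (P.parts ≃ Fin m) ≃ {f : α → Fin m // Surjective f ∧ fiberPartition f = P} where
  toFun e := ⟨e ∘ P.toParts, e.surjective.comp P.toParts_surjective,
    fiberPartition_eq_iff.2 fun _ _ => e.injective.eq_iff⟩
  invFun f :=
    have hf := fiberPartition_eq_iff.1 f.2.2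
    Equiv.ofBijective (fun b => f.1 (surjInv P.toParts_surjective b))
      ⟨fun b b' hbb' => by simpa [surjInv_eq] using (hf _ _).1 hbb', fun v => by
        obtain ⟨a, rfl⟩ := f.2.1 v
        exact ⟨P.toParts a, (hf _ _).2 (surjInv_eq _ _)⟩⟩
  left_inv e := Equiv.ext fun b => congrArg e (surjInv_eq P.toParts_surjective b)
  right_inv f := Subtype.ext <| funext fun a =>
    (fiberPartition_eq_iff.1 f.2.2 _ _).2 (surjInv_eq P.toParts_surjective _)

lemma card_parts_fiberPartition {m : ℕ} {f : α → Fin m} (hf : Surjective f) :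
    #(fiberPartition f).parts = m := by
  rw [← Fintype.card_coe]
  exact (Fintype.card_congr (((fiberPartition f).equivSurjective m).symm ⟨f, hf, rfl⟩)).trans
    (Fintype.card_fin m)

theorem card_surjWithFibers (m : ℕ) (p : Finset α → Prop) :
    Nat.card (SurjWithFibers α m p) =
      m.factorial * Nat.card {P : Finpartition (univ : Finset α) //
        #P.parts = m ∧ ∀ b ∈ P.parts, p b} := by
  classical
  let e : SurjWithFibers α m p ≃ Σ P : {P : Finpartition (univ : Finset α) //
      #P.parts = m ∧ ∀ b ∈ P.parts, p b},
      {f : α → Fin m // Surjective f ∧ fiberPartition f = P.1} :=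
    { toFun f := ⟨⟨fiberPartition f.1, card_parts_fiberPartition f.2.1, fun b hb => by
          obtain ⟨a, ha⟩ := (fiberPartition f.1).nonempty_of_mem_parts hb
          rw [← (fiberPartition f.1).part_eq_of_mem hb ha, part_fiberPartition]
          exact f.2.2 a⟩, ⟨f.1, f.2.1, rfl⟩⟩
      invFun x := ⟨x.2.1, x.2.2.1, fun a => by
          rw [← part_fiberPartition, x.2.2.2]
          exact x.1.2.2 _ (Finpartition.part_mem _ |>.2 (mem_univ a))⟩
      left_inv _ := rfl
      right_inv x := Sigma.subtype_ext (Subtype.ext x.2.2.2) rfl }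
  rw [Nat.card_congr e, Nat.card_sigma, Nat.card_eq_fintype_card (α := Subtype _), mul_comm,
    ← smul_eq_mul, ← Finset.card_univ, ← Finset.sum_const]
  refine Finset.sum_congr rfl fun P _ => ?_
  rw [← Nat.card_congr (P.1.equivSurjective m), Nat.card_eq_fintype_card,
    Fintype.card_equiv (P.1.parts.equivFinOfCardEq P.2.1), Fintype.card_coe, P.2.1]

end FiberPartition

theorem pB_eq_card_sigma (n k d : ℕ) :
    pB n k d = Nat.card (Σ m : Fin (min n k + 1),
      SurjWithFibers (Fin n) m (#· ≤ d) × SurjWithFibers (Fin k) m (#· ≤ d)) := by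
  let Ψ : (Σ m : Fin (min n k + 1),
      SurjWithFibers (Fin n) m (#· ≤ d) × SurjWithFibers (Fin k) m (#· ≤ d)) →
      Fin n → Fin k → Bool := fun x => thresholdMatrix x.2.1.1 x.2.2.1
  have hΨ : Injective Ψ := by
    rintro ⟨m, f, g⟩ ⟨m', f', g'⟩ h
    obtain ⟨hm, hf, hg⟩ := thresholdMatrix_injective f.2.1 g.2.1 f'.2.1 g'.2.1 h
    obtain rfl : m = m' := Fin.ext hm
    simp only [Sigma.mk.injEq, heq_eq_eq, Prod.mk.injEq, true_and]
    exact ⟨Subtype.ext (funext fun i => Fin.ext (hf i)),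
      Subtype.ext (funext fun j => Fin.ext (hg j))⟩
  rw [pB, Nat.card_congr (Equiv.ofInjective Ψ hΨ)]
  refine Nat.card_congr (Equiv.subtypeEquivRight fun M => ?_)
  constructor
  · rintro ⟨hM, hcol, hrow, hcold, hrowd⟩
    obtain ⟨m, f, g, hf, hg, rfl⟩ := hM.exists_eq_thresholdMatrix hcol hrow
    have hm : m < min n k + 1 := Nat.lt_succ_of_le (le_min
      (by simpa using Fintype.card_le_of_surjective f hf)
      (by simpa using Fintype.card_le_of_surjective g hg))
    refine ⟨⟨⟨m, hm⟩, ⟨f, hf, fun i => ?_⟩, ⟨g, hg, fun j => ?_⟩⟩, rfl⟩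
    · simpa only [rowOf_thresholdMatrix_eq_iff _ hg] using hrowd i
    · simpa only [colOf_thresholdMatrix_eq_iff hf] using hcold j
  · rintro ⟨⟨m, f, g⟩, rfl⟩
    refine ⟨lonesum_thresholdMatrix _ _, thresholdMatrix_cols_nonzero f.2.1 _,
      thresholdMatrix_rows_nonzero _ g.2.1, fun j => ?_, fun i => ?_⟩
    · simpa only [Ψ, colOf_thresholdMatrix_eq_iff f.2.1] using g.2.2 j
    · simpa only [Ψ, rowOf_thresholdMatrix_eq_iff _ g.2.1] using f.2.2 i

theorem pB_eq_sum_general (n k d : ℕ) :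
    pB n k d =
      ∑ m ∈ Finset.range (min n k + 1),
        m.factorial * restrictedStirling n m d *
          (m.factorial * restrictedStirling k m d) := by
  rw [pB_eq_card_sigma, Nat.card_sigma, ← Fin.sum_univ_eq_sum_range]
  refine Finset.sum_congr rfl fun m _ => ?_
  rw [Nat.card_prod, card_surjWithFibers, card_surjWithFibers]
  rfl

/-- The main counting theorem:
`pB(n,k)_{≤d} = ∑_{m=0}^{min(n,k)} m!·S(n,m)_{≤d}·m!·S(k,m)_{≤d}`. -/
theorem pB_eq_sum (n k d : ℕ) (hd : 1 ≤ d) :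
    pB n k d =
      ∑ m ∈ Finset.range (min n k + 1),
        m.factorial * restrictedStirling n m d *
          (m.factorial * restrictedStirling k m d) :=
  pB_eq_sum_general n k d
end

section
/- Fix d ≥ 1. In the ring of formal power series over ℚ in two (commuting) variables x and y, the double exponential generating function L(x,y) = ∑_{n≥0} ∑_{k≥0} pB(n,k)_{≤d} · x^n y^k / (n! k!) satisfies (E_d(x) + E_d(y) − E_d(x)·E_d(y)) · L(x,y) = 1; equivalently, (1 − (E_d(x) − 1)(E_d(y) − 1)) · L(x,y) = 1. -/
/-!
The rows of a lonesum matrix are pairwise nested, and so are its columns. If there is no zero row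
or column, the rows of largest support form a nonempty set `A` of all-one rows, and the columns
of smallest support form a nonempty set `B`, namely the columns vanishing off `A`. Deleting `A`
and `B` leaves a matrix of the same kind, and every such matrix extends uniquely in this way;
the bound `d` on repeated rows and columns becomes `#A, #B ≤ d`. Hence
`pB(n,k) = [n = k = 0] + ∑_{1 ≤ a,b ≤ d} C(n,a) C(k,b) pB(n-a,k-b)`, which says
`L = 1 + (E_d(x) - 1)(E_d(y) - 1) L`.
-/

open Finset

/-- The truncated exponential `E_d` evaluated at the variable `v` of a
bivariate formal power series algebra over `ℚ`. -/
noncomputable def EdAt (d : ℕ) (v : Fin 2) : MvPowerSeries (Fin 2) ℚ :=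
  ∑ i ∈ Finset.range (d + 1),
    (MvPowerSeries.C : ℚ →+* MvPowerSeries (Fin 2) ℚ) (1 / i.factorial) * (MvPowerSeries.X v) ^ i

/-- The double exponential generating function
`L(x,y) = ∑_{n,k} pB(n,k)_{≤d} xⁿ yᵏ / (n! k!)`. -/
noncomputable def Lgf (d : ℕ) : MvPowerSeries (Fin 2) ℚ :=
  fun e : Fin 2 →₀ ℕ =>
    (pB (e 0) (e 1) d : ℚ) / (((e 0).factorial : ℚ) * ((e 1).factorial : ℚ))

def CrossFree {α β : Type*} (M : α → β → Bool) : Prop :=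
  ∀ i i' j j', M i j → M i' j' → M i j' ∨ M i' j

theorem lonesum_iff_crossFree {n k : ℕ} (M : Fin n → Fin k → Bool) :
    Lonesum M ↔ CrossFree M := by
  constructor
  · intro hL i i' j j' hij hi'j'
    by_contra! ⟨hij', hi'j⟩
    simp only [Bool.not_eq_true] at hij' hi'j
    have hi : i ≠ i' := by rintro rfl; simp_all
    have hj : j ≠ j' := by rintro rfl; simp_all
    rcases hi.lt_or_gt with hi | hi <;> rcases hj.lt_or_gt with hj | hj
    · exact (hL i i' j j' hi hj).1 ⟨hij, hij', hi'j, hi'j'⟩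
    · exact (hL i i' j' j hi hj).2 ⟨hij', hij, hi'j', hi'j⟩
    · exact (hL i' i j j' hi hj).2 ⟨hi'j, hi'j', hij, hij'⟩
    · exact (hL i' i j' j hi hj).1 ⟨hi'j', hi'j, hij', hij⟩
  · intro hC i i' j j' _ _
    constructor
    · rintro ⟨h₁, h₂, h₃, h₄⟩
      simpa [h₂, h₃] using hC i i' j j' h₁ h₄
    · rintro ⟨h₁, h₂, h₃, h₄⟩
      simpa [h₁, h₄] using hC i i' j' j h₂ h₃

section CrossFree

variable {α β : Type*} {M : α → β → Bool}

theorem CrossFree.transpose (h : CrossFree M) : CrossFree fun j i => M i j :=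
  fun j j' i i' hij hi'j' => (h i i' j j' hij hi'j').symm

theorem CrossFree.le_or_le (h : CrossFree M) (i i' : α) : M i ≤ M i' ∨ M i' ≤ M i := by
  simp only [Pi.le_def, Bool.le_iff_imp]
  by_contra! ⟨⟨j, hij, hi'j⟩, ⟨j', hi'j', hij'⟩⟩
  have := h i i' j j' hij hi'j'
  simp_all

theorem CrossFree.exists_forall_le [Finite α] [Nonempty α] (h : CrossFree M) :
    ∃ i₀, ∀ i, M i ≤ M i₀ :=
  Directed.finite_le (r := (· ≤ ·)) (fun i i' => (h.le_or_le i i').elim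
    (fun hle => ⟨i', hle, le_rfl⟩) (fun hle => ⟨i, le_rfl, hle⟩)) id

theorem CrossFree.exists_forall_ge [Finite α] [Nonempty α] (h : CrossFree M) :
    ∃ i₀, ∀ i, M i₀ ≤ M i :=
  Directed.finite_le (r := (· ≥ ·)) (fun i i' => (h.le_or_le i i').elim
    (fun hle => ⟨i, le_rfl, hle⟩) (fun hle => ⟨i', hle, le_rfl⟩)) id

end CrossFree

/-- Membership in `L_{≤d}`, for rows and columns indexed by arbitrary finite types. -/
structure IsBoundedLonesum {α β : Type*} [Fintype α] [Fintype β] (d : ℕ)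
    (M : α → β → Bool) : Prop where
  crossFree : CrossFree M
  col_nonzero : ∀ j, ∃ i, M i j
  row_nonzero : ∀ i, ∃ j, M i j
  card_col_le : ∀ j, #{j' | (M · j') = (M · j)} ≤ d
  card_row_le : ∀ i, #{i' | M i' = M i} ≤ d

noncomputable def boundedLonesumCount (d : ℕ) (α β : Type*) [Fintype α] [Fintype β] : ℕ :=
  Nat.card {M : α → β → Bool // IsBoundedLonesum d M}

theorem pB_eq_boundedLonesumCount (n k d : ℕ) :
    pB n k d = boundedLonesumCount d (Fin n) (Fin k) :=
  Nat.card_congr <| Equiv.subtypeEquivRight fun M =>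
    ⟨fun ⟨hL, hc, hr, hcc, hrr⟩ => ⟨(lonesum_iff_crossFree M).1 hL, hc, hr, hcc, hrr⟩,
      fun h => ⟨(lonesum_iff_crossFree M).2 h.crossFree, h.col_nonzero, h.row_nonzero,
        h.card_col_le, h.card_row_le⟩⟩

theorem pB_zero_zero (d : ℕ) : pB 0 0 d = 1 := by
  rw [pB_eq_boundedLonesumCount, boundedLonesumCount, Nat.card_eq_one_iff_unique]
  exact ⟨inferInstance, ⟨⟨finZeroElim, ⟨finZeroElim, finZeroElim, finZeroElim, finZeroElim,
    finZeroElim⟩⟩⟩⟩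

section Reindex

variable {α β α' β' : Type*} [Fintype α] [Fintype β] [Fintype α'] [Fintype β']
  {d : ℕ} {M : α → β → Bool}

theorem IsBoundedLonesum.comp_equiv (h : IsBoundedLonesum d M) (e : α' ≃ α) (f : β' ≃ β) :
    IsBoundedLonesum d fun i j => M (e i) (f j) where
  crossFree i i' j j' := h.crossFree (e i) (e i') (f j) (f j')
  col_nonzero j := by
    obtain ⟨i, hi⟩ := h.col_nonzero (f j)
    exact ⟨e.symm i, by simpa using hi⟩
  row_nonzero i := by
    obtain ⟨j, hj⟩ := h.row_nonzero (e i)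
    exact ⟨f.symm j, by simpa using hj⟩
  card_col_le j := by
    refine le_of_eq_of_le (card_equiv f fun j' => ?_) (h.card_col_le (f j))
    simp [funext_iff, e.forall_congr_left]
  card_row_le i := by
    refine le_of_eq_of_le (card_equiv e fun i' => ?_) (h.card_row_le (e i))
    simp [funext_iff, f.forall_congr_left]

theorem boundedLonesumCount_congr (d : ℕ) (e : α' ≃ α) (f : β' ≃ β) :
    boundedLonesumCount d α β = boundedLonesumCount d α' β' :=
  Nat.card_congr <|
    (Equiv.arrowCongr e.symm (Equiv.arrowCongr f.symm (Equiv.refl Bool))).subtypeEquiv fun M =>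
      ⟨fun h => h.comp_equiv e f, fun h => by simpa using h.comp_equiv e.symm f.symm⟩

theorem boundedLonesumCount_eq_pB (d : ℕ) (α β : Type*) [Fintype α] [Fintype β] :
    boundedLonesumCount d α β = pB (Fintype.card α) (Fintype.card β) d := by
  rw [pB_eq_boundedLonesumCount,
    boundedLonesumCount_congr d (Fintype.equivFin α).symm (Fintype.equivFin β).symm]

end Reindex

section BlockExtend

variable {α β : Type*} [DecidableEq α] [DecidableEq β] {A : Finset α} {B : Finset β}
  {M' : {i // i ∉ A} → {j // j ∉ B} → Bool}

def blockExtend (A : Finset α) (B : Finset β) (M' : {i // i ∉ A} → {j // j ∉ B} → Bool) :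
    α → β → Bool :=
  fun i j =>
    if hi : i ∈ A then true else if hj : j ∈ B then false else M' ⟨i, hi⟩ ⟨j, hj⟩

def restrictCompl (A : Finset α) (B : Finset β) (M : α → β → Bool) :
    {i // i ∉ A} → {j // j ∉ B} → Bool :=
  fun i j => M i j

@[simp]
theorem blockExtend_of_mem {i : α} (hi : i ∈ A) (j : β) : blockExtend A B M' i j = true := by
  simp [blockExtend, hi]

@[simp]
theorem blockExtend_of_notMem_of_mem {i : α} (hi : i ∉ A) {j : β} (hj : j ∈ B) :
    blockExtend A B M' i j = false := by
  simp [blockExtend, hi, hj]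

@[simp]
theorem blockExtend_val (i : {i // i ∉ A}) (j : {j // j ∉ B}) :
    blockExtend A B M' i j = M' i j := by
  simp [blockExtend, i.2, j.2]

theorem restrictCompl_blockExtend : restrictCompl A B (blockExtend A B M') = M' := by
  funext i j
  exact blockExtend_val i j

theorem blockExtend_row_eq_iff (i i' : {i // i ∉ A}) :
    blockExtend A B M' i' = blockExtend A B M' i ↔ M' i' = M' i := by
  refine ⟨fun h => funext fun j => by simpa using congrFun h j, fun h => funext fun j => ?_⟩
  by_cases hj : j ∈ B
  · simp [i.2, i'.2, hj]
  · exact (blockExtend_val i' ⟨j, hj⟩).trans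
      ((congrFun h _).trans (blockExtend_val i ⟨j, hj⟩).symm)

theorem blockExtend_col_eq_iff (j j' : {j // j ∉ B}) :
    (blockExtend A B M' · j') = (blockExtend A B M' · j) ↔ (M' · j') = (M' · j) := by
  refine ⟨fun h => funext fun i => by simpa using congrFun h i, fun h => funext fun i => ?_⟩
  by_cases hi : i ∈ A
  · simp [hi]
  · exact (blockExtend_val ⟨i, hi⟩ j').trans
      ((congrFun h _).trans (blockExtend_val ⟨i, hi⟩ j).symm)

end BlockExtend

section Decomposition

variable {α β : Type*} [Fintype α] [Fintype β] {d : ℕ} {M : α → β → Bool}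

def fullRows (M : α → β → Bool) : Finset α := {i | ∀ j, M i j}

def blockChoices (α : Type*) [Fintype α] (d : ℕ) : Finset (Finset α) := {A | #A ∈ Icc 1 d}

theorem mem_blockChoices {A : Finset α} : A ∈ blockChoices α d ↔ A.Nonempty ∧ #A ≤ d := by
  simp [blockChoices, one_le_card]

theorem IsBoundedLonesum.nonempty_iff (h : IsBoundedLonesum d M) : Nonempty α ↔ Nonempty β :=
  ⟨fun ⟨i⟩ => ⟨(h.row_nonzero i).choose⟩, fun ⟨j⟩ => ⟨(h.col_nonzero j).choose⟩⟩

theorem IsBoundedLonesum.fullRows_mem_blockChoices [Nonempty α] (h : IsBoundedLonesum d M) :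
    fullRows M ∈ blockChoices α d := by
  obtain ⟨i₀, hi₀⟩ := h.crossFree.exists_forall_le
  have hfull : i₀ ∈ fullRows M := by
    simp only [fullRows, mem_filter, mem_univ, true_and]
    intro j
    obtain ⟨i, hi⟩ := h.col_nonzero j
    exact Bool.le_iff_imp.1 (hi₀ i j) hi
  refine mem_blockChoices.2
    ⟨⟨i₀, hfull⟩, (card_le_card fun i hi => ?_).trans (h.card_row_le i₀)⟩
  simp only [fullRows, mem_filter, mem_univ, true_and] at hi hfull ⊢
  exact funext fun j => by rw [hi j, hfull j]

variable [DecidableEq α] {A : Finset α}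

def colsSupportedIn (A : Finset α) (M : α → β → Bool) : Finset β :=
  {j | ∀ i ∉ A, M i j = false}

theorem IsBoundedLonesum.colsSupportedIn_mem_blockChoices [Nonempty β]
    (h : IsBoundedLonesum d M) : colsSupportedIn (fullRows M) M ∈ blockChoices β d := by
  obtain ⟨j₀, hj₀⟩ := h.crossFree.transpose.exists_forall_ge
  have hsupp : j₀ ∈ colsSupportedIn (fullRows M) M := by
    simp only [colsSupportedIn, fullRows, mem_filter, mem_univ, true_and]
    intro i hi
    by_contra hij₀
    exact hi fun j => Bool.le_iff_imp.1 (hj₀ j i) (by simpa using hij₀)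
  refine mem_blockChoices.2
    ⟨⟨j₀, hsupp⟩, (card_le_card fun j hj => ?_).trans (h.card_col_le j₀)⟩
  simp only [colsSupportedIn, fullRows, mem_filter, mem_univ, true_and] at hj hsupp ⊢
  funext i
  by_cases hi : ∀ j, M i j
  · rw [hi j, hi j₀]
  · rw [hj i hi, hsupp i hi]

theorem restrictCompl_col_nonzero (j : {j // j ∉ colsSupportedIn A M}) :
    ∃ i, restrictCompl A (colsSupportedIn A M) M i j := by
  obtain ⟨i, hi, hij⟩ : ∃ i ∉ A, M i j = true := by
    simpa [colsSupportedIn] using j.2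
  exact ⟨⟨i, hi⟩, hij⟩

variable [DecidableEq β] {B : Finset β} {M' : {i // i ∉ A} → {j // j ∉ B} → Bool}

theorem blockExtend_restrictCompl (hA : ∀ i ∈ A, ∀ j, M i j) :
    blockExtend A (colsSupportedIn A M) (restrictCompl A (colsSupportedIn A M) M) = M := by
  funext i j
  by_cases hi : i ∈ A
  · simp [hi, hA i hi j]
  by_cases hj : j ∈ colsSupportedIn A M
  · rw [blockExtend_of_notMem_of_mem hi hj]
    simp only [colsSupportedIn, mem_filter, mem_univ, true_and] at hj
    exact (hj i hi).symm
  · exact blockExtend_val (M' := restrictCompl A _ M) ⟨i, hi⟩ ⟨j, hj⟩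

theorem fullRows_blockExtend (hB : B.Nonempty) : fullRows (blockExtend A B M') = A := by
  obtain ⟨j, hj⟩ := hB
  ext i
  simp only [fullRows, mem_filter, mem_univ, true_and]
  refine ⟨fun h => ?_, fun hi j => blockExtend_of_mem hi j⟩
  by_contra hi
  simpa [hi, hj] using h j

theorem colsSupportedIn_blockExtend (hM' : ∀ j, ∃ i, M' i j) :
    colsSupportedIn A (blockExtend A B M') = B := by
  ext j
  simp only [colsSupportedIn, mem_filter, mem_univ, true_and]
  refine ⟨fun h => ?_, fun hj i hi => blockExtend_of_notMem_of_mem hi hj⟩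
  by_contra hj
  obtain ⟨i, hi⟩ := hM' ⟨j, hj⟩
  simpa [blockExtend, i.2, hj, hi] using h i i.2

theorem card_filter_eq_card_filter_subtype {γ : Type*} [DecidableEq γ] (f : α → γ)
    (hA : ∀ a ∈ A, ∀ b ∉ A, f a ≠ f b) (i : {i // i ∉ A}) :
    #{i' | f i' = f i} = #{i' : {i // i ∉ A} | f i' = f i} := by
  rw [← card_map (Function.Embedding.subtype _)]
  congr 1
  ext x
  simp only [mem_filter, mem_univ, true_and, mem_map]
  refine ⟨fun h => ⟨⟨x, fun hx => hA x hx i i.2 h⟩, h, rfl⟩, ?_⟩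
  rintro ⟨x, h, rfl⟩
  exact h

theorem card_rows_blockExtend_of_mem (hB : B.Nonempty) {i : α} (hi : i ∈ A) :
    #{i' | blockExtend A B M' i' = blockExtend A B M' i} = #A := by
  obtain ⟨j, hj⟩ := hB
  congr 1
  ext i'
  simp only [mem_filter, mem_univ, true_and]
  refine ⟨fun h => ?_, fun hi' => funext fun j => by simp [hi, hi']⟩
  by_contra hi'
  simpa [hi, hi', hj] using congrFun h j

theorem card_rows_blockExtend_val (hB : B.Nonempty) (i : {i // i ∉ A}) :
    #{i' | blockExtend A B M' i' = blockExtend A B M' i} = #{i' | M' i' = M' i} := by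
  obtain ⟨j, hj⟩ := hB
  have hsep : ∀ a ∈ A, ∀ b ∉ A, blockExtend A B M' a ≠ blockExtend A B M' b :=
    fun a ha b hb h => by simpa [ha, hb, hj] using congrFun h j
  rw [card_filter_eq_card_filter_subtype _ hsep i]
  exact congrArg card (filter_congr fun i' _ => blockExtend_row_eq_iff i i')

theorem card_cols_blockExtend_of_mem (hM' : ∀ j, ∃ i, M' i j) {j : β} (hj : j ∈ B) :
    #{j' | (blockExtend A B M' · j') = (blockExtend A B M' · j)} = #B := by
  congr 1
  ext j'
  simp only [mem_filter, mem_univ, true_and]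
  refine ⟨fun h => ?_, fun hj' => funext fun i => ?_⟩
  · by_contra hj'
    obtain ⟨i, hi⟩ := hM' ⟨j', hj'⟩
    simpa [blockExtend, i.2, hj, hj', hi] using congrFun h i
  · by_cases hi : i ∈ A
    · simp [hi]
    · simp [hi, hj, hj']

theorem card_cols_blockExtend_val (hM' : ∀ j, ∃ i, M' i j) (j : {j // j ∉ B}) :
    #{j' | (blockExtend A B M' · j') = (blockExtend A B M' · j)} =
      #{j' | (M' · j') = (M' · j)} := by
  have hsep :
      ∀ a ∈ B, ∀ b ∉ B, (blockExtend A B M' · a) ≠ (blockExtend A B M' · b) := by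
    intro a ha b hb h
    obtain ⟨i, hi⟩ := hM' ⟨b, hb⟩
    simpa [blockExtend, ha, hb, hi, i.2] using congrFun h i
  rw [card_filter_eq_card_filter_subtype (fun j i => blockExtend A B M' i j) hsep j]
  exact congrArg card (filter_congr fun j' _ => blockExtend_col_eq_iff j j')

theorem isBoundedLonesum_blockExtend (hA : A ∈ blockChoices α d) (hB : B ∈ blockChoices β d)
    (h : IsBoundedLonesum d M') : IsBoundedLonesum d (blockExtend A B M') where
  crossFree i i' j j' hij hi'j' := by
    by_cases hi : i ∈ A
    · simp [hi]
    by_cases hi' : i' ∈ A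
    · simp [hi']
    have hj : j ∉ B := fun hj => by simp [hi, hj] at hij
    have hj' : j' ∉ B := fun hj' => by simp [hi', hj'] at hi'j'
    simpa [blockExtend, hi, hi', hj, hj'] using
      h.crossFree ⟨i, hi⟩ ⟨i', hi'⟩ ⟨j, hj⟩ ⟨j', hj'⟩
        (by simpa [blockExtend, hi, hj] using hij) (by simpa [blockExtend, hi', hj'] using hi'j')
  col_nonzero j := by
    obtain ⟨i, hi⟩ := (mem_blockChoices.1 hA).1
    exact ⟨i, blockExtend_of_mem hi j⟩
  row_nonzero i := by
    by_cases hi : i ∈ A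
    · obtain ⟨j, -⟩ := (mem_blockChoices.1 hB).1
      exact ⟨j, blockExtend_of_mem hi j⟩
    · obtain ⟨j, hj⟩ := h.row_nonzero ⟨i, hi⟩
      exact ⟨j, (blockExtend_val ⟨i, hi⟩ j).trans hj⟩
  card_col_le j := by
    by_cases hj : j ∈ B
    · exact (card_cols_blockExtend_of_mem h.col_nonzero hj).trans_le (mem_blockChoices.1 hB).2
    · exact (card_cols_blockExtend_val h.col_nonzero ⟨j, hj⟩).trans_le (h.card_col_le _)
  card_row_le i := by
    by_cases hi : i ∈ A
    · exact (card_rows_blockExtend_of_mem (mem_blockChoices.1 hB).1 hi).trans_le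
        (mem_blockChoices.1 hA).2
    · exact (card_rows_blockExtend_val (mem_blockChoices.1 hB).1 ⟨i, hi⟩).trans_le
        (h.card_row_le _)

theorem IsBoundedLonesum.of_blockExtend (hB : B.Nonempty) (hM' : ∀ j, ∃ i, M' i j)
    (h : IsBoundedLonesum d (blockExtend A B M')) : IsBoundedLonesum d M' where
  crossFree i i' j j' hij hi'j' := by
    simpa using h.crossFree i i' j j' (by simpa using hij) (by simpa using hi'j')
  col_nonzero := hM'
  row_nonzero i := by
    obtain ⟨j, hij⟩ := h.row_nonzero i
    have hj : j ∉ B := fun hj => by simp [i.2, hj] at hij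
    exact ⟨⟨j, hj⟩, by simpa [blockExtend, i.2, hj] using hij⟩
  card_col_le j := (card_cols_blockExtend_val hM' j).symm.trans_le (h.card_col_le j)
  card_row_le i := (card_rows_blockExtend_val hB i).symm.trans_le (h.card_row_le i)

theorem card_isBoundedLonesum_fiber (hA : A ∈ blockChoices α d) (hB : B ∈ blockChoices β d) :
    Nat.card {M : α → β → Bool //
        IsBoundedLonesum d M ∧ fullRows M = A ∧ colsSupportedIn (fullRows M) M = B} =
      boundedLonesumCount d {i // i ∉ A} {j // j ∉ B} := by
  have hfull {M : α → β → Bool} : ∀ i ∈ fullRows M, ∀ j, M i j := fun i hi => by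
    simpa [fullRows] using hi
  refine Nat.card_congr
    { toFun := fun M => ⟨restrictCompl A B M.1, ?_⟩
      invFun := fun M' => ⟨blockExtend A B M'.1, isBoundedLonesum_blockExtend hA hB M'.2,
        fullRows_blockExtend (mem_blockChoices.1 hB).1, ?_⟩
      left_inv := ?_
      right_inv := fun M' => Subtype.ext restrictCompl_blockExtend }
  · obtain ⟨M, hM, rfl, rfl⟩ := M
    refine IsBoundedLonesum.of_blockExtend (mem_blockChoices.1 hB).1 restrictCompl_col_nonzero ?_
    rwa [blockExtend_restrictCompl hfull]
  · rw [fullRows_blockExtend (mem_blockChoices.1 hB).1]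
    exact colsSupportedIn_blockExtend M'.2.col_nonzero
  · rintro ⟨M, hM, rfl, rfl⟩
    exact Subtype.ext (blockExtend_restrictCompl hfull)

theorem boundedLonesumCount_eq_sum (h : Nonempty α ∨ Nonempty β) :
    boundedLonesumCount d α β = ∑ A ∈ blockChoices α d, ∑ B ∈ blockChoices β d,
      boundedLonesumCount d {i // i ∉ A} {j // j ∉ B} := by
  classical
  have hmaps : ∀ M ∈ ({M | IsBoundedLonesum d M} : Finset (α → β → Bool)),
      (fullRows M, colsSupportedIn (fullRows M) M) ∈
        blockChoices α d ×ˢ blockChoices β d := by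
    intro M hM
    replace hM : IsBoundedLonesum d M := (mem_filter.1 hM).2
    obtain ⟨_, _⟩ : Nonempty α ∧ Nonempty β := by have := hM.nonempty_iff; tauto
    exact mem_product.2 ⟨hM.fullRows_mem_blockChoices, hM.colsSupportedIn_mem_blockChoices⟩
  rw [boundedLonesumCount, Nat.card_eq_fintype_card, Fintype.card_subtype,
    card_eq_sum_card_fiberwise hmaps, sum_product]
  refine sum_congr rfl fun A hA => sum_congr rfl fun B hB => ?_
  rw [← card_isBoundedLonesum_fiber hA hB, Nat.card_eq_fintype_card, Fintype.card_subtype,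
    filter_filter]
  simp only [Prod.mk.injEq]

end Decomposition

theorem sum_blockChoices {α : Type*} [Fintype α] (d : ℕ) (g : ℕ → ℕ) :
    ∑ A ∈ blockChoices α d, g #A = ∑ a ∈ Icc 1 d, (Fintype.card α).choose a * g a := by
  rw [← sum_fiberwise_of_maps_to' (s := blockChoices α d) (t := Icc 1 d) (g := card)
    (fun A hA => (mem_filter.1 hA).2) g]
  refine sum_congr rfl fun a ha => ?_
  have hfiber : {A ∈ blockChoices α d | #A = a} = powersetCard a univ := by
    ext A
    simp only [blockChoices, mem_filter, mem_univ, true_and, mem_powersetCard, subset_univ]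
    exact ⟨And.right, fun hA => ⟨hA ▸ ha, hA⟩⟩
  rw [sum_const, hfiber, card_powersetCard, card_univ, smul_eq_mul]

theorem pB_eq_ite_add_sum (n k d : ℕ) :
    pB n k d = (if n = 0 ∧ k = 0 then 1 else 0) +
      ∑ a ∈ Icc 1 d, n.choose a * ∑ b ∈ Icc 1 d, k.choose b * pB (n - a) (k - b) d := by
  by_cases h₀ : n = 0 ∧ k = 0
  · obtain ⟨rfl, rfl⟩ := h₀
    rw [pB_zero_zero, if_pos ⟨rfl, rfl⟩, left_eq_add]
    exact sum_eq_zero fun a ha => by simp [Nat.choose_eq_zero_of_lt (mem_Icc.1 ha).1]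
  have hne : Nonempty (Fin n) ∨ Nonempty (Fin k) := by
    simp only [← Fin.pos_iff_nonempty]
    omega
  have hcompl (A : Finset (Fin n)) (B : Finset (Fin k)) :
      boundedLonesumCount d {i // i ∉ A} {j // j ∉ B} = pB (n - #A) (k - #B) d := by
    rw [boundedLonesumCount_eq_pB, Fintype.card_subtype_compl, Fintype.card_subtype_compl]
    simp
  rw [if_neg h₀, zero_add, pB_eq_boundedLonesumCount, boundedLonesumCount_eq_sum hne]
  simp only [hcompl]
  calc ∑ A ∈ blockChoices (Fin n) d, ∑ B ∈ blockChoices (Fin k) d, pB (n - #A) (k - #B) d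
      = ∑ A ∈ blockChoices (Fin n) d, ∑ b ∈ Icc 1 d, k.choose b * pB (n - #A) (k - b) d :=
        sum_congr rfl fun A _ => by
          simpa using sum_blockChoices (α := Fin k) d fun b => pB (n - #A) (k - b) d
    _ = _ := by
        simpa using sum_blockChoices (α := Fin n) d
          fun a => ∑ b ∈ Icc 1 d, k.choose b * pB (n - a) (k - b) d

section GeneratingFunction

open MvPowerSeries Nat

def bivariateEgf (f : ℕ → ℕ → ℚ) : MvPowerSeries (Fin 2) ℚ :=
  fun e => f (e 0) (e 1) / ((e 0)! * (e 1)!)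

theorem coeff_bivariateEgf (f : ℕ → ℕ → ℚ) (e : Fin 2 →₀ ℕ) :
    coeff e (bivariateEgf f) = f (e 0) (e 1) / ((e 0)! * (e 1)!) :=
  rfl

theorem Lgf_eq_bivariateEgf (d : ℕ) : Lgf d = bivariateEgf fun n k => pB n k d :=
  rfl

theorem bivariateEgf_add (f g : ℕ → ℕ → ℚ) :
    bivariateEgf (fun n k => f n k + g n k) = bivariateEgf f + bivariateEgf g := by
  ext e
  simp [coeff_bivariateEgf, add_div]

theorem bivariateEgf_ite_zero :
    bivariateEgf (fun n k => if n = 0 ∧ k = 0 then 1 else 0) = 1 := by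
  ext e
  have he : e = 0 ↔ e 0 = 0 ∧ e 1 = 0 := by
    simp [Finsupp.ext_iff, Fin.forall_fin_two]
  by_cases h : e 0 = 0 ∧ e 1 = 0
  · simp [coeff_bivariateEgf, coeff_one, he.2 h]
  · simp [coeff_bivariateEgf, coeff_one, he, h]

theorem EdAt_sub_one (d : ℕ) (v : Fin 2) :
    EdAt d v - 1 = ∑ a ∈ Icc 1 d, monomial (Finsupp.single v a) ((a ! : ℚ)⁻¹) := by
  have hrange : range (d + 1) = insert 0 (Icc 1 d) := by
    ext a
    simp only [mem_range, mem_insert, mem_Icc]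
    omega
  have hterm (a : ℕ) :
      C (1 / (a ! : ℚ)) * X v ^ a = monomial (Finsupp.single v a) ((a ! : ℚ)⁻¹) := by
    rw [X_pow_eq, ← monomial_zero_eq_C_apply, monomial_mul_monomial, zero_add, mul_one, one_div]
  simp only [EdAt, hrange, sum_insert (show 0 ∉ Icc 1 d by simp), hterm]
  simp

theorem coeff_EdAt_sub_one_mul (d : ℕ) (v : Fin 2) (F : MvPowerSeries (Fin 2) ℚ)
    (e : Fin 2 →₀ ℕ) :
    coeff e ((EdAt d v - 1) * F) =
      ∑ a ∈ Icc 1 d, if a ≤ e v then coeff (e - Finsupp.single v a) F / a ! else 0 := by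
  rw [EdAt_sub_one, sum_mul, map_sum]
  refine sum_congr rfl fun a _ => ?_
  simp only [coeff_monomial_mul, Finsupp.single_le_iff, inv_mul_eq_div]

theorem EdAt_zero_sub_one_mul_bivariateEgf (d : ℕ) (f : ℕ → ℕ → ℚ) :
    (EdAt d 0 - 1) * bivariateEgf f =
      bivariateEgf fun n k => ∑ a ∈ Icc 1 d, n.choose a * f (n - a) k := by
  ext e
  rw [coeff_EdAt_sub_one_mul, coeff_bivariateEgf, sum_div]
  refine sum_congr rfl fun a _ => ?_
  split_ifs with ha
  · simp only [coeff_bivariateEgf, Finsupp.tsub_apply, Finsupp.single_eq_same,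
      Finsupp.single_eq_of_ne (show (1 : Fin 2) ≠ 0 by decide), tsub_zero]
    rw [Nat.cast_choose ℚ ha]
    field_simp
  · simp [Nat.choose_eq_zero_of_lt (not_le.1 ha)]

theorem EdAt_one_sub_one_mul_bivariateEgf (d : ℕ) (f : ℕ → ℕ → ℚ) :
    (EdAt d 1 - 1) * bivariateEgf f =
      bivariateEgf fun n k => ∑ b ∈ Icc 1 d, k.choose b * f n (k - b) := by
  ext e
  rw [coeff_EdAt_sub_one_mul, coeff_bivariateEgf, sum_div]
  refine sum_congr rfl fun b _ => ?_
  split_ifs with hb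
  · simp only [coeff_bivariateEgf, Finsupp.tsub_apply, Finsupp.single_eq_same,
      Finsupp.single_eq_of_ne (show (0 : Fin 2) ≠ 1 by decide), tsub_zero]
    rw [Nat.cast_choose ℚ hb]
    field_simp
  · simp [Nat.choose_eq_zero_of_lt (not_le.1 hb)]

end GeneratingFunction

theorem lonesum_double_egf_general (d : ℕ) :
    (EdAt d 0 + EdAt d 1 - EdAt d 0 * EdAt d 1) * Lgf d = 1 ∧
      (1 - (EdAt d 0 - 1) * (EdAt d 1 - 1)) * Lgf d = 1 := by
  have hrec : Lgf d = 1 + (EdAt d 0 - 1) * ((EdAt d 1 - 1) * Lgf d) := by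
    rw [Lgf_eq_bivariateEgf, EdAt_one_sub_one_mul_bivariateEgf,
      EdAt_zero_sub_one_mul_bivariateEgf, ← bivariateEgf_ite_zero, ← bivariateEgf_add]
    congr 1
    funext n k
    rw [pB_eq_ite_add_sum n k d]
    push_cast
    simp [mul_sum]
  have hinv : (1 - (EdAt d 0 - 1) * (EdAt d 1 - 1)) * Lgf d = 1 := by
    linear_combination hrec
  exact ⟨by linear_combination hinv, hinv⟩

/-- The double exponential generating function of restricted lonesum matrices
satisfies `(E_d(x) + E_d(y) − E_d(x)E_d(y))·L(x,y) = 1`, equivalently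
`(1 − (E_d(x) − 1)(E_d(y) − 1))·L(x,y) = 1`. -/
theorem lonesum_double_egf (d : ℕ) (hd : 1 ≤ d) :
    (EdAt d 0 + EdAt d 1 - EdAt d 0 * EdAt d 1) * Lgf d = 1 ∧
      (1 - (EdAt d 0 - 1) * (EdAt d 1 - 1)) * Lgf d = 1 :=
  lonesum_double_egf_general d
end

section
/- For all n ≥ 1, k ≥ 1 and d ≥ 1, the set L_{≤d}(n,k) is nonempty (equivalently pB(n,k)_{≤d} > 0) if and only if ⌈n/d⌉ ≤ k and k ≤ n·d. -/
/-!
Two incomparable rows of a lonesum matrix would contain a forbidden 2×2 submatrix, so its rows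
form a chain in `{0,1}^k`. Nonzero members of a chain have distinct weights in `1, …, k`, so there
are at most `k` distinct rows, each repeated at most `d` times: hence `n ≤ k d`, and by
transposing, `k ≤ n d`. Conversely the staircase `M i j = 1 ↔ j n < (i + 1) k` is lonesum, and two of its columns
(rows) whose indices differ by `d` or more are already distinct once `k ≤ n d` (`n ≤ k d`).
-/

open Finset

theorem Lonesum.transpose_s15 {n k : ℕ} {M : Fin n → Fin k → Bool} (hM : Lonesum M) :
    Lonesum fun j i => M i j :=
  fun j j' i i' hj hi =>
    ⟨fun ⟨h₁, h₂, h₃, h₄⟩ => (hM i i' j j' hi hj).1 ⟨h₁, h₃, h₂, h₄⟩,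
     fun ⟨h₁, h₂, h₃, h₄⟩ => (hM i i' j j' hi hj).2 ⟨h₁, h₃, h₂, h₄⟩⟩

theorem Lonesum.rowOf_le_total {n k : ℕ} {M : Fin n → Fin k → Bool} (hM : Lonesum M)
    (i i' : Fin n) : rowOf M i ≤ rowOf M i' ∨ rowOf M i' ≤ rowOf M i := by
  by_contra! h
  simp only [Pi.le_def, rowOf, Bool.le_iff_imp, not_forall, Bool.not_eq_true] at h
  obtain ⟨⟨j, hij, hi'j⟩, ⟨j', hi'j', hij'⟩⟩ := h
  rcases lt_trichotomy i i' with hi | rfl | hi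
  · rcases lt_trichotomy j j' with hj | rfl | hj
    · exact (hM i i' j j' hi hj).1 ⟨hij, hij', hi'j, hi'j'⟩
    · simp_all
    · exact (hM i i' j' j hi hj).2 ⟨hij', hij, hi'j', hi'j⟩
  · simp_all
  · rcases lt_trichotomy j j' with hj | rfl | hj
    · exact (hM i' i j j' hi hj).2 ⟨hi'j, hi'j', hij, hij'⟩
    · simp_all
    · exact (hM i' i j' j hi hj).1 ⟨hi'j', hi'j, hij', hij⟩

theorem Lonesum.colOf_le_total_s15 {n k : ℕ} {M : Fin n → Fin k → Bool} (hM : Lonesum M)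
    (j j' : Fin k) : colOf M j ≤ colOf M j' ∨ colOf M j' ≤ colOf M j :=
  hM.transpose_s15.rowOf_le_total j j'

theorem strictMono_card_filter_eq_true {κ : Type*} [Fintype κ] :
    StrictMono fun r : κ → Bool => #{j | r j = true} := by
  intro r r' hlt
  obtain ⟨hle, j, hj⟩ := Pi.lt_def.mp hlt
  apply card_lt_card
  rw [ssubset_iff_of_subset (monotone_filter_right _ fun j _ => Bool.le_iff_imp.mp (hle j))]
  exact ⟨j, by simp_all [Bool.lt_iff]⟩

theorem card_le_mul_card_of_le_total {ι κ : Type*} [Fintype ι] [Fintype κ] {d : ℕ}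
    (v : ι → κ → Bool) (htotal : ∀ a b, v a ≤ v b ∨ v b ≤ v a)
    (hne : ∀ a, ∃ j, v a j = true) (hfiber : ∀ a, #{b | v b = v a} ≤ d) :
    Fintype.card ι ≤ d * Fintype.card κ := by
  classical
  have hinj : Set.InjOn (fun r : κ → Bool => #{j | r j = true}) (univ.image v) := by
    simp only [coe_image, coe_univ, Set.image_univ, Set.InjOn, Set.mem_range]
    rintro _ ⟨a, rfl⟩ _ ⟨b, rfl⟩ hab
    rcases htotal a b with h | h
    · exact h.eq_of_not_lt fun hlt => (strictMono_card_filter_eq_true hlt).ne hab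
    · exact (h.eq_of_not_lt fun hlt => (strictMono_card_filter_eq_true hlt).ne hab.symm).symm
  have himage : #(univ.image v) ≤ Fintype.card κ := by
    rw [← card_image_of_injOn hinj]
    refine (card_le_card fun w hw => ?_).trans (Nat.card_Icc 1 (Fintype.card κ)).le
    simp only [image_image, mem_image, mem_univ, true_and, Function.comp_apply] at hw
    obtain ⟨a, rfl⟩ := hw
    obtain ⟨j, hj⟩ := hne a
    exact mem_Icc.mpr ⟨card_pos.mpr ⟨j, by simpa using hj⟩, card_le_univ _⟩
  calc Fintype.card ι = #(univ : Finset ι) := (card_univ).symm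
    _ ≤ d * #(univ.image v) := card_le_mul_card_image _ _ (by
        simp only [mem_image, mem_univ, true_and, forall_exists_index]
        rintro _ a rfl
        exact hfiber a)
    _ ≤ d * Fintype.card κ := Nat.mul_le_mul_left d himage

theorem card_filter_apply_eq_le {K d : ℕ} {α : Type*} [DecidableEq α] (f : Fin K → α)
    (hf : ∀ x y : Fin K, (x : ℕ) + d ≤ y → f x ≠ f y) (x : Fin K) :
    #{y | f y = f x} ≤ d := by
  set s : Finset (Fin K) := {y | f y = f x}
  have hs : s.Nonempty := ⟨x, by simp [s]⟩
  set m : ℕ := ↑(s.min' hs)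
  have hmaps : ∀ y ∈ s, (y : ℕ) ∈ Ico m (m + d) := by
    intro y hy
    refine mem_Ico.mpr ⟨s.min'_le y hy, not_le.mp fun hle => hf _ y hle ?_⟩
    have hm := s.min'_mem hs
    simp only [s, mem_filter, mem_univ, true_and] at hy hm
    rw [hm, hy]
  calc #s ≤ #(Ico m (m + d)) := card_le_card_of_injOn _ hmaps Fin.val_injective.injOn
    _ = d := by simp

theorem lonesum_decide_lt {n k : ℕ} {α : Type*} [LinearOrder α] (a : Fin k → α)
    (b : Fin n → α) : Lonesum fun i j => decide (a j < b i) := by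
  intro i i' j j' _ _
  constructor <;> rintro ⟨h₁, h₂, h₃, h₄⟩ <;>
    simp only [decide_eq_true_eq, decide_eq_false_iff_not, not_lt] at h₁ h₂ h₃ h₄ <;> order

theorem exists_le_mul_lt_add {n : ℕ} (b : ℕ) (hn : 0 < n) :
    ∃ j, b ≤ j * n ∧ j * n < b + n :=
  ⟨(b + n - 1) / n, by
    have := Nat.lt_div_mul_add (a := b + n - 1) hn
    have := Nat.div_mul_le_self (b + n - 1) n
    omega⟩

def staircase (n k : ℕ) : Fin n → Fin k → Bool :=
  fun i j => decide ((j : ℕ) * n < (i + 1) * k)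

section Staircase

variable {n k : ℕ}

theorem lonesum_staircase : Lonesum (staircase n k) :=
  lonesum_decide_lt (fun j => (j : ℕ) * n) (fun i => ((i : ℕ) + 1) * k)

theorem staircase_exists_eq_true_col (hn : 0 < n) (j : Fin k) :
    ∃ i, staircase n k i j = true :=
  ⟨⟨n - 1, by omega⟩, by
    simp only [staircase, decide_eq_true_eq, Nat.sub_add_cancel hn]
    nlinarith [j.isLt]⟩

theorem staircase_exists_eq_true_row (hk : 0 < k) (i : Fin n) :
    ∃ j, staircase n k i j = true :=
  ⟨⟨0, hk⟩, by simp [staircase]; positivity⟩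

theorem staircase_colOf_ne {j₁ j₂ : Fin k} (h : (j₁ : ℕ) * n + k ≤ j₂ * n) :
    colOf (staircase n k) j₁ ≠ colOf (staircase n k) j₂ := by
  have hk : 0 < k := j₁.pos
  have hn : 0 < n := Nat.pos_of_ne_zero (by rintro rfl; omega)
  have hlt : (j₁ : ℕ) * n < (j₁ * n / k + 1) * k := by
    rw [add_one_mul]; exact Nat.lt_div_mul_add hk
  have hle : (j₁ * n / k + 1) * k ≤ (j₂ : ℕ) * n := by
    rw [add_one_mul]; have := Nat.div_mul_le_self (j₁ * n) k; omega
  have hi : (j₁ : ℕ) * n / k < n := by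
    rw [Nat.div_lt_iff_lt_mul hk]; nlinarith [j₁.isLt]
  intro heq
  have := congrFun heq ⟨_, hi⟩
  simp only [colOf, staircase, decide_eq_decide] at this
  exact (this.mp hlt).not_ge hle

theorem staircase_rowOf_ne {i₁ i₂ : Fin n} (h : (i₁ : ℕ) * k + n ≤ i₂ * k) :
    rowOf (staircase n k) i₁ ≠ rowOf (staircase n k) i₂ := by
  have hn : 0 < n := i₁.pos
  obtain ⟨j, hge, hlt⟩ := exists_le_mul_lt_add (((i₁ : ℕ) + 1) * k) hn
  replace hlt : j * n < ((i₂ : ℕ) + 1) * k := by rw [add_one_mul] at hge hlt ⊢; omega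
  have hj : j < k := by nlinarith [i₂.isLt]
  intro heq
  have := congrFun heq ⟨j, hj⟩
  simp only [rowOf, staircase, decide_eq_decide] at this
  exact (this.mpr hlt).not_ge hge

theorem staircase_card_colOf_eq_le {d : ℕ} (h : k ≤ n * d) (j : Fin k) :
    #{j' | colOf (staircase n k) j' = colOf (staircase n k) j} ≤ d :=
  card_filter_apply_eq_le _ (fun _ _ hj => staircase_colOf_ne (by nlinarith)) j

theorem staircase_card_rowOf_eq_le {d : ℕ} (h : n ≤ k * d) (i : Fin n) :
    #{i' | rowOf (staircase n k) i' = rowOf (staircase n k) i} ≤ d :=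
  card_filter_apply_eq_le _ (fun _ _ hi => staircase_rowOf_ne (by nlinarith)) i

end Staircase

theorem pB_pos_iff_general (n k d : ℕ) (hd : 1 ≤ d) :
    0 < pB n k d ↔ ((n + d - 1) / d ≤ k ∧ k ≤ n * d) := by
  rw [pB, Nat.card_pos_iff, ← Nat.ceilDiv_eq_add_pred_div, ceilDiv_le_iff_le_mul hd]
  constructor
  · rintro ⟨⟨M, hM, hcol, hrow, hcolOf, hrowOf⟩, -⟩
    exact ⟨by simpa using card_le_mul_card_of_le_total (rowOf M) hM.rowOf_le_total hrow hrowOf,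
      by simpa [mul_comm] using
        card_le_mul_card_of_le_total (colOf M) hM.colOf_le_total_s15 hcol hcolOf⟩
  · rintro ⟨hnk, hkn⟩
    have hn (j : Fin k) : 0 < n := Nat.pos_of_ne_zero (by rintro rfl; have := j.pos; omega)
    have hk (i : Fin n) : 0 < k := Nat.pos_of_ne_zero (by rintro rfl; have := i.pos; simp_all)
    refine ⟨⟨staircase n k, lonesum_staircase, fun j => staircase_exists_eq_true_col (hn j) j,
      fun i => staircase_exists_eq_true_row (hk i) i, staircase_card_colOf_eq_le hkn,
      staircase_card_rowOf_eq_le (by rwa [mul_comm])⟩, inferInstance⟩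

/-- For `n, k, d ≥ 1`, there exists a matrix in `L_{≤d}(n,k)` (equivalently
`pB(n,k)_{≤d} > 0`) iff `⌈n/d⌉ ≤ k ≤ n·d`. -/
theorem pB_pos_iff (n k d : ℕ) (hn : 1 ≤ n) (hk : 1 ≤ k) (hd : 1 ≤ d) :
    0 < pB n k d ↔ ((n + d - 1) / d ≤ k ∧ k ≤ n * d) :=
  pB_pos_iff_general n k d hd
end

section
/- For all natural numbers n and k, the following integer identity holds: ∑_{m=0}^{min(n,k)} m! · S(n+1, m+1) · m! · S(k+1, m+1) = (−1)^n · ∑_{m=0}^{n} (−1)^m · m! · S(n,m) · (m+1)^k. -/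
open Finset

/-- The Stirling number of the second kind `S(n,m)`: the number of partitions
of an `n`-element set into exactly `m` nonempty blocks. -/
noncomputable def stirling (n m : ℕ) : ℕ :=
  Nat.card {P : Finpartition (univ : Finset (Fin n)) // P.parts.card = m}

/-!
Write `σ(n, m) = m! S(n, m)` and `a(n, j) = j! S(n+1, j+1)`. Both sides equal
`∑ⱼ a(n, j) a(k, j)`: on the right, expand `(m+1)^k = ∑ⱼ C(m, j) a(k, j)` and exchange the sums;
the inner alternating sum `∑ₘ (-1)^m C(m, j) σ(n, m)` is `(-1)^n a(n, j)`. Both expansions follow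
by induction from the recurrence `S(n+1, m+1) = (m+1) S(n, m+1) + S(n, m)`. The partition count
`stirling` satisfies it because `σ(n, m)` counts surjections (partitions with labelled blocks), and
a surjection from `Option α` either stays surjective on `α` or sends `none` to the one value that
`α` misses.
-/

open Function Nat

theorem Nat.card_equiv {γ β : Type*} [Finite γ] [Finite β] :
    Nat.card (γ ≃ β) = if Nat.card γ = Nat.card β then (Nat.card β)! else 0 := by
  have := Fintype.ofFinite γ
  have := Fintype.ofFinite β
  classical
  simp only [Nat.card_eq_fintype_card]
  split_ifs with h
  · rw [Fintype.card_equiv (Fintype.equivOfCardEq h), h]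
  · exact Fintype.card_eq_zero_iff.2 ⟨fun e ↦ h (Fintype.card_congr e)⟩

namespace Finpartition

variable {α β : Type*} [Fintype α] [DecidableEq α]

def partOf (P : Finpartition (univ : Finset α)) (a : α) : P.parts :=
  ⟨P.part a, P.part_mem.2 (mem_univ a)⟩

lemma partOf_surjective (P : Finpartition (univ : Finset α)) : Surjective P.partOf :=
  fun ⟨_, hp⟩ ↦ let ⟨a, _, ha⟩ := P.part_surjOn hp; ⟨a, Subtype.ext ha⟩

lemma partOf_eq_partOf_iff {P : Finpartition (univ : Finset α)} {a b : α} :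
    P.partOf a = P.partOf b ↔ a ∈ P.part b := by
  rw [P.mem_part_iff_part_eq_part (mem_univ a) (mem_univ b), partOf, partOf, Subtype.mk.injEq]

lemma ext_partOf {P Q : Finpartition (univ : Finset α)}
    (h : ∀ a b, P.partOf a = P.partOf b ↔ Q.partOf a = Q.partOf b) : P = Q := by
  have hpart : P.part = Q.part := funext fun b ↦ Finset.ext fun a ↦ by
    simpa only [partOf_eq_partOf_iff] using h a b
  ext p
  constructor <;> intro hp
  · obtain ⟨a, -, rfl⟩ := P.part_surjOn hp
    simp [hpart]
  · obtain ⟨a, -, rfl⟩ := Q.part_surjOn hp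
    simp [← hpart]

lemma exists_equiv_comp_partOf {P : Finpartition (univ : Finset α)} {f : α → β}
    (hf : Surjective f) (hP : ∀ a b, P.partOf a = P.partOf b ↔ f a = f b) :
    ∃ e : P.parts ≃ β, e ∘ P.partOf = f := by
  set g : P.parts → β := f ∘ surjInv P.partOf_surjective
  have hg : g ∘ P.partOf = f := funext fun a ↦
    (hP _ _).1 (surjInv_eq P.partOf_surjective (P.partOf a))
  refine ⟨Equiv.ofBijective g ⟨?_, ?_⟩, hg⟩
  · intro p q hpq
    obtain ⟨a, rfl⟩ := P.partOf_surjective p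
    obtain ⟨b, rfl⟩ := P.partOf_surjective q
    rw [hP, ← hg]
    exact hpq
  · exact Surjective.of_comp (f := g) (hg ▸ hf)

noncomputable def labelledEquivSurjective :
    (Σ P : Finpartition (univ : Finset α), P.parts ≃ β) ≃ {f : α → β // Surjective f} :=
  Equiv.ofBijective (fun x ↦ ⟨x.2 ∘ x.1.partOf, x.2.surjective.comp x.1.partOf_surjective⟩) <| by
    constructor
    · rintro ⟨P, e⟩ ⟨Q, e'⟩ h
      have hf : ∀ a, e (P.partOf a) = e' (Q.partOf a) := congrFun (congrArg Subtype.val h)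
      obtain rfl : P = Q := ext_partOf fun a b ↦ by
        rw [← e.injective.eq_iff, ← e'.injective.eq_iff, hf, hf]
      obtain rfl : e = e' := Equiv.ext <| P.partOf_surjective.forall.2 hf
      rfl
    · rintro ⟨f, hf⟩
      classical
      let P := ofSetoid (Setoid.ker f)
      obtain ⟨e, he⟩ := exists_equiv_comp_partOf (P := P) hf fun a b ↦ by
        rw [partOf_eq_partOf_iff, mem_part_ofSetoid_iff_rel, Setoid.ker_def, eq_comm]
      exact ⟨⟨P, e⟩, Subtype.ext he⟩

theorem card_surjective [Finite β] :
    Nat.card {f : α → β // Surjective f} =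
      Nat.card {P : Finpartition (univ : Finset α) // #P.parts = Nat.card β} * (Nat.card β)! := by
  classical
  rw [← Nat.card_congr labelledEquivSurjective, Nat.card_sigma, Nat.card_eq_fintype_card,
    Fintype.card_subtype, card_filter, sum_mul]
  simp only [Nat.card_equiv, Nat.card_eq_finsetCard, ite_mul, one_mul, zero_mul]

end Finpartition

def surjCount (n m : ℕ) : ℕ := m ! * stirlingSecond n m

theorem surjCount_succ_left (n m : ℕ) :
    surjCount (n + 1) m = m * (surjCount n m + surjCount n (m - 1)) := by
  cases m with
  | zero => simp [surjCount]
  | succ m =>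
    simp only [surjCount, stirlingSecond_succ_succ, factorial_succ, add_tsub_cancel_right]
    ring

theorem surjCount_zero_left (m : ℕ) : surjCount 0 m = if m = 0 then 1 else 0 := by
  cases m <;> simp [surjCount]

theorem surjCount_eq_zero_of_lt {n m : ℕ} (h : n < m) : surjCount n m = 0 := by
  simp [surjCount, stirlingSecond_eq_zero_of_lt h]

section
variable {α β : Type*}

noncomputable def rangeEqComplSingletonEquiv (b : β) :
    {g : {g : α → β // {b}ᶜ ⊆ Set.range g} // ¬Surjective g.1} ≃
      {h : α → {y // y ≠ b} // Surjective h} where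
  toFun g := by
    have hb : ∀ a, g.1.1 a ≠ b := fun a hab ↦ g.2 fun y ↦ by
      by_cases hy : y = b
      · exact ⟨a, hab.trans hy.symm⟩
      · exact g.1.2 hy
    refine ⟨fun a ↦ ⟨g.1.1 a, hb a⟩, fun y ↦ ?_⟩
    obtain ⟨a, ha⟩ := g.1.2 y.2
    exact ⟨a, Subtype.ext ha⟩
  invFun h := ⟨⟨fun a ↦ h.1 a, fun y hy ↦ (h.2 ⟨y, hy⟩).imp fun _ ha ↦ congrArg Subtype.val ha⟩,
    fun hs ↦ (hs b).elim fun a ha ↦ (h.1 a).2 ha⟩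
  left_inv _ := rfl
  right_inv _ := rfl

theorem card_compl_singleton_subset_range [Finite α] [Finite β] (b : β) :
    Nat.card {g : α → β // {b}ᶜ ⊆ Set.range g} =
      Nat.card {g : α → β // Surjective g} + Nat.card {h : α → {y // y ≠ b} // Surjective h} := by
  classical
  have hsurj : {g : {g : α → β // {b}ᶜ ⊆ Set.range g} // Surjective g.1} ≃
      {g : α → β // Surjective g} :=
    Equiv.subtypeSubtypeEquivSubtype fun hg y _ ↦ hg y
  rw [← Nat.card_congr (rangeEqComplSingletonEquiv b), ← Nat.card_congr hsurj, ← Nat.card_sum]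
  exact Nat.card_congr (Equiv.sumCompl _).symm

theorem card_surjective_option [Finite α] [Fintype β] :
    Nat.card {f : Option α → β // Surjective f} =
      ∑ b : β, (Nat.card {g : α → β // Surjective g} +
        Nat.card {h : α → {y // y ≠ b} // Surjective h}) := by
  have hsurj (f : Option α → β) : Surjective f ↔ {f none}ᶜ ⊆ Set.range (f ∘ some) := by
    simp only [Surjective, Set.subset_def, Set.mem_compl_singleton_iff, Set.mem_range, comp_apply,
      Option.exists]
    exact forall_congr' fun y ↦ by rw [or_iff_not_imp_left, eq_comm]
  rw [Nat.card_congr ((Equiv.piOptionEquivProd.subtypeEquiv hsurj).trans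
    (Equiv.subtypeProdEquivSigmaSubtype fun b g ↦ {b}ᶜ ⊆ Set.range g)), Nat.card_sigma]
  exact sum_congr rfl fun b _ ↦ card_compl_singleton_subset_range b

end

theorem card_surjective_eq_surjCount (α β : Type*) [Finite α] [Finite β] :
    Nat.card {f : α → β // Surjective f} = surjCount (Nat.card α) (Nat.card β) := by
  induction α using Finite.induction_empty_option generalizing β with
  | of_equiv e ih =>
    rw [← Nat.card_congr e, ← ih β]
    refine Nat.card_congr ((e.arrowCongr (.refl β)).subtypeEquiv fun f ↦ ?_).symm
    exact (e.symm.surjective.of_comp_iff f).symm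
  | h_empty =>
    rcases isEmpty_or_nonempty β with hβ | hβ
    · have : Unique {f : PEmpty → β // Surjective f} :=
        ⟨⟨⟨PEmpty.elim, isEmptyElim⟩⟩, fun f ↦ Subtype.ext (funext fun x ↦ x.elim)⟩
      rw [Nat.card_unique, Nat.card_of_isEmpty, Nat.card_of_isEmpty, surjCount_zero_left,
        if_pos rfl]
    · have : IsEmpty {f : PEmpty → β // Surjective f} :=
        ⟨fun f ↦ (f.2 (Classical.arbitrary β)).elim fun x _ ↦ x.elim⟩
      rw [Nat.card_of_isEmpty, Nat.card_of_isEmpty, surjCount_zero_left, if_neg Nat.card_pos.ne']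
  | @h_option α _ ih =>
    classical
    have := Fintype.ofFinite β
    have hne (b : β) : Nat.card {y // y ≠ b} = Nat.card β - 1 := by
      rw [← Nat.card_congr (Equiv.optionSubtypeNe b), Finite.card_option, add_tsub_cancel_right]
    rw [card_surjective_option, Finite.card_option, surjCount_succ_left]
    simp only [ih, hne, sum_const, smul_eq_mul, Finset.card_univ, Fintype.card_eq_nat_card]

theorem stirling_eq_stirlingSecond (n m : ℕ) : stirling n m = stirlingSecond n m := by
  have h := (Finpartition.card_surjective (α := Fin n) (β := Fin m)).symm.trans
    (card_surjective_eq_surjCount (Fin n) (Fin m))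
  simp only [Nat.card_fin, surjCount, mul_comm (m !)] at h
  exact Nat.eq_of_mul_eq_mul_right (factorial_pos m) h

-- `j ! * S(n+1, j+1)` counts the surjections `Fin (n + 1) → Fin (j + 1)` that fix `0`.
def pinnedSurjCount (n j : ℕ) : ℕ := j ! * stirlingSecond (n + 1) (j + 1)

theorem surjCount_succ_left_eq_mul_pinnedSurjCount (n j : ℕ) :
    surjCount (n + 1) j = j * pinnedSurjCount n (j - 1) := by
  cases j with
  | zero => simp [surjCount]
  | succ j => simp only [surjCount, pinnedSurjCount, factorial_succ, add_tsub_cancel_right]; ring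

theorem pinnedSurjCount_eq (n j : ℕ) :
    pinnedSurjCount n j = surjCount n (j + 1) + surjCount n j := by
  simp only [surjCount, pinnedSurjCount, stirlingSecond_succ_succ, factorial_succ]
  ring

theorem pinnedSurjCount_succ_left (n j : ℕ) :
    pinnedSurjCount (n + 1) j = (j + 1) * pinnedSurjCount n j + j * pinnedSurjCount n (j - 1) := by
  rw [pinnedSurjCount_eq, surjCount_succ_left_eq_mul_pinnedSurjCount,
    surjCount_succ_left_eq_mul_pinnedSurjCount, add_tsub_cancel_right]

theorem pinnedSurjCount_zero_left (j : ℕ) : pinnedSurjCount 0 j = if j = 0 then 1 else 0 := by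
  cases j <;> simp [pinnedSurjCount_eq, surjCount_zero_left]

theorem pinnedSurjCount_eq_zero_of_lt {n j : ℕ} (h : n < j) : pinnedSurjCount n j = 0 := by
  rw [pinnedSurjCount, stirlingSecond_eq_zero_of_lt (by omega), mul_zero]

theorem Finset.sum_range_eq_sum_range_succ {M : Type*} [AddCommMonoid M] {f : ℕ → M} {N : ℕ}
    (h0 : f 0 = 0) (hN : f N = 0) : ∑ i ∈ range N, f i = ∑ i ∈ range N, f (i + 1) := by
  have h := (sum_range_succ f N).symm.trans (sum_range_succ' f N)
  rwa [hN, h0, add_zero, add_zero] at h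

theorem Nat.succ_mul_choose_eq_mul_choose_add (m j : ℕ) :
    (m + 1) * m.choose j = (j + 1) * (m.choose j + m.choose (j + 1)) := by
  rw [add_one_mul_choose_eq, choose_succ_succ', mul_comm]

theorem Nat.succ_mul_choose_succ_eq (t j : ℕ) :
    (t + 1) * (t + 1).choose j = (t + j + 1) * t.choose j + j * t.choose (j - 1) := by
  cases j with
  | zero => simp
  | succ j =>
    rw [add_tsub_cancel_right, choose_succ_succ', mul_add, succ_mul_choose_eq_mul_choose_add]
    ring

theorem pow_eq_sum_choose_mul_pinnedSurjCount {m N : ℕ} (hm : m < N) (k : ℕ) :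
    (m + 1) ^ k = ∑ j ∈ range N, m.choose j * pinnedSurjCount k j := by
  induction k with
  | zero =>
    rw [sum_eq_single_of_mem 0 (mem_range.2 (zero_lt_of_lt hm))]
    · simp [pinnedSurjCount_zero_left]
    · intro j _ hj
      simp [pinnedSurjCount_zero_left, hj]
  | succ k ih =>
    have hshift : ∑ j ∈ range N, m.choose j * (j * pinnedSurjCount k (j - 1)) =
        ∑ j ∈ range N, m.choose (j + 1) * ((j + 1) * pinnedSurjCount k j) :=
      sum_range_eq_sum_range_succ (by simp) (by simp [choose_eq_zero_of_lt hm])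
    calc (m + 1) ^ (k + 1)
        = ∑ j ∈ range N, (m + 1) * m.choose j * pinnedSurjCount k j := by
          rw [pow_succ', ih, mul_sum]
          simp only [mul_assoc]
      _ = ∑ j ∈ range N, m.choose j * ((j + 1) * pinnedSurjCount k j) +
            ∑ j ∈ range N, m.choose (j + 1) * ((j + 1) * pinnedSurjCount k j) := by
          rw [← sum_add_distrib]
          refine sum_congr rfl fun j _ ↦ ?_
          rw [succ_mul_choose_eq_mul_choose_add]
          ring
      _ = ∑ j ∈ range N, m.choose j * pinnedSurjCount (k + 1) j := by
          simp only [← hshift, ← sum_add_distrib, pinnedSurjCount_succ_left, mul_add]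

theorem sum_neg_one_pow_mul_choose_mul_surjCount {n N : ℕ} (hn : n < N) (j : ℕ) :
    ∑ m ∈ range N, (-1 : ℤ) ^ m * m.choose j * surjCount n m = (-1) ^ n * pinnedSurjCount n j := by
  induction n generalizing j with
  | zero =>
    rw [sum_eq_single_of_mem 0 (mem_range.2 hn)]
    · cases j <;> simp [surjCount_zero_left, pinnedSurjCount_zero_left]
    · intro m _ hm
      simp [surjCount_zero_left, hm]
  | succ n ih =>
    have hshift : ∑ m ∈ range N, (-1 : ℤ) ^ m * m.choose j * (m * surjCount n (m - 1)) =
        ∑ m ∈ range N, (-1 : ℤ) ^ (m + 1) * (m + 1).choose j * ((m + 1) * surjCount n m) := by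
      refine sum_range_eq_sum_range_succ (by simp) ?_
      rw [surjCount_eq_zero_of_lt (by omega)]
      simp
    have hchoose (m : ℕ) : ((m : ℤ) + 1) * (m + 1).choose j =
        (m + j + 1) * m.choose j + j * m.choose (j - 1) := by
      exact_mod_cast succ_mul_choose_succ_eq m j
    calc ∑ m ∈ range N, (-1 : ℤ) ^ m * m.choose j * surjCount (n + 1) m
        = ∑ m ∈ range N, (-1 : ℤ) ^ m * m.choose j * (m * surjCount n m) +
            ∑ m ∈ range N, (-1 : ℤ) ^ (m + 1) * (m + 1).choose j * ((m + 1) * surjCount n m) := by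
          rw [← hshift, ← sum_add_distrib]
          simp only [surjCount_succ_left]
          push_cast
          simp only [mul_add]
      _ = -((j + 1) * ∑ m ∈ range N, (-1 : ℤ) ^ m * m.choose j * surjCount n m +
            j * ∑ m ∈ range N, (-1 : ℤ) ^ m * (m.choose (j - 1) : ℕ) * surjCount n m) := by
          simp only [mul_sum, ← sum_add_distrib, ← sum_neg_distrib]
          refine sum_congr rfl fun m _ ↦ ?_
          linear_combination (-(-1 : ℤ) ^ m * surjCount n m) * hchoose m
      _ = (-1) ^ (n + 1) * pinnedSurjCount (n + 1) j := by
          rw [ih (by omega), ih (by omega), pinnedSurjCount_succ_left]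
          push_cast
          ring

theorem sum_neg_one_pow_mul_surjCount_mul_pow (n k : ℕ) :
    ∑ m ∈ range (n + 1), (-1 : ℤ) ^ m * surjCount n m * (m + 1) ^ k =
      (-1) ^ n * ∑ j ∈ range (n + 1), (pinnedSurjCount n j * pinnedSurjCount k j : ℤ) := by
  calc ∑ m ∈ range (n + 1), (-1 : ℤ) ^ m * surjCount n m * (m + 1) ^ k
      = ∑ m ∈ range (n + 1), ∑ j ∈ range (n + 1),
          (-1 : ℤ) ^ m * m.choose j * surjCount n m * pinnedSurjCount k j := by
        refine sum_congr rfl fun m hm ↦ ?_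
        have h : ((m : ℤ) + 1) ^ k = ∑ j ∈ range (n + 1), (m.choose j * pinnedSurjCount k j : ℤ) :=
          mod_cast pow_eq_sum_choose_mul_pinnedSurjCount (mem_range.1 hm) k
        rw [h, mul_sum]
        exact sum_congr rfl fun j _ ↦ by ring
    _ = ∑ j ∈ range (n + 1), (-1 : ℤ) ^ n * pinnedSurjCount n j * pinnedSurjCount k j := by
        rw [sum_comm]
        refine sum_congr rfl fun j _ ↦ ?_
        rw [← sum_neg_one_pow_mul_choose_mul_surjCount (lt_add_one n), sum_mul]
    _ = _ := by
        rw [mul_sum]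
        simp only [mul_assoc]

/-- Brewbaker's identity (the two formulas for poly-Bernoulli numbers):
`∑_{m=0}^{min(n,k)} m!·S(n+1,m+1)·m!·S(k+1,m+1)
  = (−1)ⁿ·∑_{m=0}^{n} (−1)ᵐ·m!·S(n,m)·(m+1)ᵏ`. -/
theorem poly_bernoulli_two_formulas (n k : ℕ) :
    ∑ m ∈ Finset.range (min n k + 1),
        ((m.factorial : ℤ) * stirling (n + 1) (m + 1) *
          (m.factorial * stirling (k + 1) (m + 1))) =
      (-1 : ℤ) ^ n *
        ∑ m ∈ Finset.range (n + 1),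
          (-1 : ℤ) ^ m * m.factorial * stirling n m * (m + 1) ^ k := by
  have hsign : (-1 : ℤ) ^ n * (-1) ^ n = 1 := by rw [← mul_pow, neg_one_mul, neg_neg, one_pow]
  simp only [stirling_eq_stirlingSecond]
  calc ∑ m ∈ range (min n k + 1), ((m ! : ℤ) * stirlingSecond (n + 1) (m + 1) *
          (m ! * stirlingSecond (k + 1) (m + 1)))
      = ∑ m ∈ range (min n k + 1), (pinnedSurjCount n m * pinnedSurjCount k m : ℤ) := by
        simp only [pinnedSurjCount, Nat.cast_mul]
    _ = ∑ m ∈ range (n + 1), (pinnedSurjCount n m * pinnedSurjCount k m : ℤ) := by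
        refine sum_subset (range_subset_range.2 (by omega)) fun m hmn hm ↦ ?_
        rw [mem_range] at hmn hm
        rw [pinnedSurjCount_eq_zero_of_lt (n := k) (by omega), Nat.cast_zero, mul_zero]
    _ = (-1) ^ n * ∑ m ∈ range (n + 1), (-1 : ℤ) ^ m * surjCount n m * (m + 1) ^ k := by
        rw [sum_neg_one_pow_mul_surjCount_mul_pow, ← mul_assoc, hsign, one_mul]
    _ = _ := by simp only [surjCount, Nat.cast_mul, mul_assoc]
end
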